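/- arXiv:1809.09781 — 5 statements merged into one kernel-verified Lean document; each statement's English description precedes it below -/
import Mathlib

section
/- Let 𝓗 be a complex Hilbert space, let U and U′ be strongly continuous one-parameter unitary groups on 𝓗, and let B ∈ B(𝓗) be self-adjoint such that the Duhamel relation U′_t ψ = U_t ψ + i ∫₀^t U_{t−s} B U′_s ψ ds holds for all t ∈ ℝ and ψ ∈ 𝓗 (so that U′ is the unitary group generated by H + B when U_t = e^{itH}). Let A ⊆ B(𝓗) be a C*-subalgebra with U_t A U_t⁻¹ = A and U′_t A U′_t⁻¹ = A for all t ∈ ℝ. Then {a ∈ A : b·𝔏_U ⊆ closed linear span of 𝔏_U·B(𝓗) for b ∈ {a, a*}} = {a ∈ A : b·𝔏_{U′} ⊆ closed linear span of 𝔏_{U′}·B(𝓗) for b ∈ {a, a*}}. In particular, (A,U) is a cross representation if and only if (A,U′) is a cross representation. -/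
open MeasureTheory Filter

noncomputable section

variable {H : Type*} [NormedAddCommGroup H] [InnerProductSpace ℂ H] [CompleteSpace H]

/-- The norm-closed *-subalgebra of `B(H)` generated by the integrated operators
`U(f) : ψ ↦ ∫ f(g) U_g ψ dμ(g)`, for `f ∈ L¹(G,μ)`. -/
def integratedAlgebra {G : Type*} [MeasurableSpace G] (μ : Measure G)
    (U : G → H →L[ℂ] H) : Set (H →L[ℂ] H) :=
  closure (↑(NonUnitalStarAlgebra.adjoin ℂ
    {T : H →L[ℂ] H | ∃ f : G → ℂ, Integrable f μ ∧ ∀ ψ : H, T ψ = ∫ g, f g • U g ψ ∂μ}) :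
    Set (H →L[ℂ] H))

/-- The closed linear span of `S · B(H)`. -/
def closedRightSpan (S : Set (H →L[ℂ] H)) : Set (H →L[ℂ] H) :=
  closure (↑(Submodule.span ℂ
    {x : H →L[ℂ] H | ∃ L ∈ S, ∃ B : H →L[ℂ] H, x = L * B}) : Set (H →L[ℂ] H))

/-- `(A, S)` is a cross representation: `A·S ⊆ closed span (S·B(H))`. -/
def IsCrossRep (A S : Set (H →L[ℂ] H)) : Prop :=
  ∀ a ∈ A, ∀ L ∈ S, a * L ∈ closedRightSpan S

/-- A strongly continuous unitary representation of a topological group. -/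
def IsUnitaryRep {G : Type*} [Group G] [TopologicalSpace G] (U : G → H →L[ℂ] H) : Prop :=
  (∀ g, U g ∈ unitary (H →L[ℂ] H)) ∧ (∀ g h, U (g * h) = U g * U h) ∧
    ∀ ψ : H, Continuous fun g => U g ψ

/-- A strongly continuous one-parameter unitary group. -/
def IsUnitaryOneParam (U : ℝ → H →L[ℂ] H) : Prop :=
  (∀ t, U t ∈ unitary (H →L[ℂ] H)) ∧ (∀ s t, U (s + t) = U s * U t) ∧
    ∀ ψ : H, Continuous fun t => U t ψ


theorem l1_translation (f : ℝ → ℂ) (hf : Integrable f) :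
    Tendsto (fun t : ℝ => ∫ s, ‖f (s - t) - f s‖) (nhds 0) (nhds 0) := by
  refine Metric.tendsto_nhds.mpr fun ε hε => ?_
  obtain ⟨g, hgsupp, hgsub, hgcont, hgint⟩ :=
    hf.exists_hasCompactSupport_integral_sub_le (show (0:ℝ) < ε/4 by positivity)
  obtain ⟨R, hR⟩ := hgsupp.isCompact.isBounded.subset_closedBall 0
  set K : Set ℝ := Metric.closedBall 0 (R+1) with hKdef
  have hK : MeasurableSet K := measurableSet_closedBall
  have hKfin : volume K < ⊤ := measure_closedBall_lt_top
  set V : ℝ := (volume K).toReal with hVdef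
  have hV0 : 0 ≤ V := ENNReal.toReal_nonneg
  set ε' : ℝ := ε / (2 * (V + 1)) with hε'def
  have hε' : 0 < ε' := by positivity
  obtain ⟨δ, hδ0, hδ⟩ :=
    Metric.uniformContinuous_iff.mp (hgsupp.uniformContinuous_of_continuous hgcont) ε' hε'
  refine Metric.eventually_nhds_iff.mpr ⟨min δ 1, lt_min hδ0 one_pos, fun t ht => ?_⟩
  rw [dist_zero_right] at *
  have ht1 : ‖t‖ < δ := lt_of_lt_of_le ht (min_le_left _ _)
  have ht2 : ‖t‖ ≤ 1 := le_of_lt (lt_of_lt_of_le ht (min_le_right _ _))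
  have i1 : Integrable (fun s => f (s - t)) := hf.comp_sub_right t
  have i2 : Integrable (fun s => g (s - t)) := hgint.comp_sub_right t
  have j1 : Integrable (fun s => ‖f (s - t) - f s‖) := (i1.sub hf).norm
  have j2 : Integrable (fun s => ‖f (s - t) - g (s - t)‖) := (i1.sub i2).norm
  have j3 : Integrable (fun s => ‖g (s - t) - g s‖) := (i2.sub hgint).norm
  have j4 : Integrable (fun s => ‖g s - f s‖) := (hgint.sub hf).norm
  have hptwise : ∀ s, ‖f (s - t) - f s‖ ≤
      ‖f (s - t) - g (s - t)‖ + ‖g (s - t) - g s‖ + ‖g s - f s‖ := by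
    intro s
    simpa [dist_eq_norm] using dist_triangle4 (f (s - t)) (g (s - t)) (g s) (f s)
  have hmid : ∫ s, ‖g (s - t) - g s‖ ≤ ε' * V := by
    have hvanish : ∀ s ∉ K, ‖g (s - t) - g s‖ = 0 := by
      intro s hs
      have hs' : R + 1 < |s| := by
        simp only [hKdef, Metric.mem_closedBall, Real.dist_eq, sub_zero, not_le] at hs
        exact hs
      have h1 : g s = 0 := by
        apply image_eq_zero_of_notMem_tsupport
        intro hmem
        have := hR hmem
        simp only [Metric.mem_closedBall, Real.dist_eq, sub_zero] at this
        linarith [abs_nonneg t]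
      have h2 : g (s - t) = 0 := by
        apply image_eq_zero_of_notMem_tsupport
        intro hmem
        have := hR hmem
        simp only [Metric.mem_closedBall, Real.dist_eq, sub_zero] at this
        have : |s| - |t| ≤ |s - t| := abs_sub_abs_le_abs_sub s t
        have ht2' : |t| ≤ 1 := by simpa using ht2
        linarith [hR hmem, abs_sub_abs_le_abs_sub s t]
      simp [h1, h2]
    have heq : (fun s => ‖g (s - t) - g s‖) = K.indicator (fun s => ‖g (s - t) - g s‖) := by
      funext s
      by_cases hs : s ∈ K
      · simp [hs]
      · simp [hs, hvanish s hs]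
    rw [heq, integral_indicator hK]
    calc ∫ s in K, ‖g (s - t) - g s‖
        ≤ ∫ _ in K, ε' := by
          refine setIntegral_mono_on (j3.integrableOn) (integrableOn_const hKfin.ne) hK
            fun s _ => ?_
          have : dist (s - t) s < δ := by
            simpa [Real.dist_eq, abs_sub_comm] using ht1
          simpa [dist_eq_norm] using (hδ this).le
      _ = V * ε' := by rw [setIntegral_const, smul_eq_mul]; rfl
      _ = ε' * V := mul_comm _ _
  have key : ∫ s, ‖f (s - t) - f s‖ ≤ ε/4 + ε' * V + ε/4 := by
    calc ∫ s, ‖f (s - t) - f s‖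
        ≤ ∫ s, (‖f (s - t) - g (s - t)‖ + ‖g (s - t) - g s‖ + ‖g s - f s‖) :=
          integral_mono j1 ((j2.add j3).add j4) hptwise
      _ = (∫ s, ‖f (s - t) - g (s - t)‖) + (∫ s, ‖g (s - t) - g s‖) + ∫ s, ‖g s - f s‖ := by
          have j23 : Integrable (fun s => ‖f (s - t) - g (s - t)‖ + ‖g (s - t) - g s‖) :=
            j2.add j3
          rw [integral_add j23 j4, integral_add j2 j3]
      _ ≤ ε/4 + ε' * V + ε/4 := by
          have e1 : (∫ s, ‖f (s - t) - g (s - t)‖) = ∫ s, ‖f s - g s‖ :=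
            integral_sub_right_eq_self (fun s => ‖f s - g s‖) t
          have e3 : (∫ s, ‖g s - f s‖) = ∫ s, ‖f s - g s‖ := by
            simp_rw [norm_sub_rev (g _)]
          rw [e1, e3]
          exact add_le_add (add_le_add hgsub hmid) hgsub
  have hnn : 0 ≤ ∫ s, ‖f (s - t) - f s‖ := integral_nonneg fun s => norm_nonneg _
  rw [Real.norm_of_nonneg hnn]
  have : ε' * V < ε / 2 := by
    rw [hε'def]
    rw [div_mul_eq_mul_div, div_lt_iff₀ (by positivity)]
    nlinarith
  linarith

namespace CrossAux
variable {U : ℝ → H →L[ℂ] H} (hU : IsUnitaryOneParam U)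
include hU

theorem norm_U_apply (t : ℝ) (ψ : H) : ‖U t ψ‖ = ‖ψ‖ :=
  ContinuousLinearMap.norm_map_of_mem_unitary (hU.1 t) ψ

theorem norm_U_le (t : ℝ) : ‖U t‖ ≤ 1 := by
  refine ContinuousLinearMap.opNorm_le_bound _ zero_le_one fun ψ => ?_
  rw [norm_U_apply hU, one_mul]

theorem U_zero : U 0 = 1 := by
  have h := hU.2.1 0 0
  rw [add_zero] at h
  have h2 := Unitary.star_mul_self_of_mem (hU.1 0)
  have h3 : star (U 0) * U 0 = star (U 0) * (U 0 * U 0) := by rw [← h]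
  rw [h2, ← mul_assoc, h2, one_mul] at h3
  exact h3.symm

theorem U_star (t : ℝ) : star (U t) = U (-t) := by
  have h1 : U t * U (-t) = 1 := by rw [← hU.2.1, add_neg_cancel, U_zero hU]
  calc star (U t) = star (U t) * (U t * U (-t)) := by rw [h1, mul_one]
  _ = U (-t) := by rw [← mul_assoc, Unitary.star_mul_self_of_mem (hU.1 t), one_mul]

theorem integrable_smul {f : ℝ → ℂ} (hf : Integrable f) (ψ : H) :
    Integrable fun s => f s • U s ψ := by
  refine Integrable.mono' (hf.norm.mul_const ‖ψ‖)
    (hf.aestronglyMeasurable.smul (hU.2.2 ψ).aestronglyMeasurable) ?_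
  filter_upwards with s
  rw [norm_smul, norm_U_apply hU]

/-- The integrated operator `U(f)`. -/
def integOp (f : ℝ → ℂ) (hf : Integrable f) : H →L[ℂ] H :=
  LinearMap.mkContinuous
    { toFun := fun ψ => ∫ s, f s • U s ψ
      map_add' := fun ψ φ => by
        simp_rw [map_add, smul_add]
        exact integral_add (integrable_smul hU hf ψ) (integrable_smul hU hf φ)
      map_smul' := fun c ψ => by
        simp_rw [_root_.map_smul, RingHom.id_apply, smul_comm (f _) c, integral_smul] }
    (∫ s, ‖f s‖) fun ψ => by
      refine (norm_integral_le_integral_norm _).trans ?_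
      simp_rw [norm_smul, norm_U_apply hU, integral_mul_const]
      exact le_rfl

theorem integOp_apply (f : ℝ → ℂ) (hf : Integrable f) (ψ : H) :
    integOp hU f hf ψ = ∫ s, f s • U s ψ := rfl


def gen (U : ℝ → H →L[ℂ] H) : Set (H →L[ℂ] H) :=
  {T : H →L[ℂ] H | ∃ f : ℝ → ℂ, Integrable f volume ∧ ∀ ψ : H, T ψ = ∫ s, f s • U s ψ}

theorem U_mul_gen_apply (f : ℝ → ℂ) (hf : Integrable f) (T : H →L[ℂ] H)
    (hT : ∀ ψ : H, T ψ = ∫ s, f s • U s ψ) (t : ℝ) (ψ : H) :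
    (U t * T) ψ = ∫ s, f (s - t) • U s ψ := by
  have h1 : (U t * T) ψ = ∫ s, f s • U (t + s) ψ := by
    rw [ContinuousLinearMap.mul_apply, hT ψ,
      ← ContinuousLinearMap.integral_comp_comm _ (integrable_smul hU hf ψ)]
    congr 1; funext s
    rw [ContinuousLinearMap.map_smul, ← ContinuousLinearMap.mul_apply, ← hU.2.1]
  rw [h1, ← integral_add_right_eq_self (fun s => f (s - t) • U s ψ) t]
  congr 1; funext s
  rw [add_sub_cancel_right, add_comm]

theorem norm_U_mul_sub_le (f : ℝ → ℂ) (hf : Integrable f) (T : H →L[ℂ] H)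
    (hT : ∀ ψ : H, T ψ = ∫ s, f s • U s ψ) (t : ℝ) :
    ‖U t * T - T‖ ≤ ∫ s, ‖f (s - t) - f s‖ := by
  refine ContinuousLinearMap.opNorm_le_bound _ (integral_nonneg fun s => norm_nonneg _) fun ψ => ?_
  have i1 : Integrable (fun s => f (s - t) • U s ψ) := integrable_smul hU (hf.comp_sub_right t) ψ
  have i2 : Integrable (fun s => f s • U s ψ) := integrable_smul hU hf ψ
  rw [ContinuousLinearMap.sub_apply, U_mul_gen_apply hU f hf T hT t ψ, hT ψ, ← integral_sub i1 i2]
  simp_rw [← sub_smul]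
  calc ‖∫ s, (f (s - t) - f s) • U s ψ‖ ≤ ∫ s, ‖(f (s - t) - f s) • U s ψ‖ :=
        norm_integral_le_integral_norm _
    _ = ∫ s, ‖f (s - t) - f s‖ * ‖ψ‖ := by simp_rw [norm_smul, norm_U_apply hU]
    _ = (∫ s, ‖f (s - t) - f s‖) * ‖ψ‖ := integral_mul_const _ _

def contSet (U : ℝ → H →L[ℂ] H) : Set (H →L[ℂ] H) :=
  {T : H →L[ℂ] H | ∀ ε > (0:ℝ), ∃ δ > (0:ℝ), ∀ t : ℝ, |t| < δ → ‖U t * T - T‖ < ε}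

theorem gen_subset_contSet : gen U ⊆ contSet U := by
  rintro T ⟨f, hf, hT⟩ ε hε
  have := Metric.tendsto_nhds.mp (_root_.l1_translation f hf) ε hε
  obtain ⟨δ, hδ0, hδ⟩ := Metric.eventually_nhds_iff.mp this
  refine ⟨δ, hδ0, fun t ht => ?_⟩
  have h1 := hδ (show dist t 0 < δ by simpa [Real.dist_eq] using ht)
  rw [dist_zero_right, Real.norm_eq_abs] at h1
  exact lt_of_le_of_lt (norm_U_mul_sub_le hU f hf T hT t)
    (lt_of_le_of_lt (le_abs_self _) h1)


theorem gen_star_closed {T : H →L[ℂ] H} (hT : T ∈ gen U) : star T ∈ gen U := by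
  obtain ⟨f, hf, hTf⟩ := hT
  set g : ℝ → ℂ := fun s => (starRingEnd ℂ) (f (-s)) with hg
  have hgint : Integrable g := by
    refine Integrable.mono' hf.comp_neg.norm
      (Complex.continuous_conj.comp_aestronglyMeasurable hf.comp_neg.aestronglyMeasurable) ?_
    filter_upwards with s
    simp [hg]
  have hTeq : T = integOp hU f hf := by
    ext ψ; rw [hTf ψ, integOp_apply]
  have key : star T = integOp hU g hgint := by
    rw [ContinuousLinearMap.star_eq_adjoint]
    symm
    rw [ContinuousLinearMap.eq_adjoint_iff]
    intro x y
    have lhs : inner (𝕜 := ℂ) (integOp hU g hgint x) y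
        = ∫ s, f (-s) * inner (𝕜 := ℂ) x (U (-s) y) := by
      rw [← inner_conj_symm (integOp hU g hgint x) y, integOp_apply,
        ← integral_inner (integrable_smul hU hgint x) y, ← integral_conj]
      congr 1; funext s
      rw [inner_smul_right, map_mul, starRingEnd_self_apply]
      congr 1
      rw [inner_conj_symm]
      have e3 : U (-s) = ContinuousLinearMap.adjoint (U s) := by
        rw [← ContinuousLinearMap.star_eq_adjoint, U_star hU]
      rw [e3, ContinuousLinearMap.adjoint_inner_right]
    have rhs : inner (𝕜 := ℂ) x (T y) = ∫ s, f s * inner (𝕜 := ℂ) x (U s y) := by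
      rw [hTf y, ← integral_inner (integrable_smul hU hf y) x]
      congr 1; funext s
      rw [inner_smul_right]
    rw [lhs, rhs, ← integral_neg_eq_self (fun s => f s * inner (𝕜 := ℂ) x (U s y)) volume]
  exact ⟨g, hgint, fun ψ => by rw [key, integOp_apply]⟩

theorem contSet_zero : (0 : H →L[ℂ] H) ∈ contSet U := by
  intro ε hε
  exact ⟨1, one_pos, fun t _ => by simpa using hε⟩

omit hU in
theorem contSet_add {T S : H →L[ℂ] H} (hT : T ∈ contSet U) (hS : S ∈ contSet U) :
    T + S ∈ contSet U := by
  intro ε hε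
  obtain ⟨δ₁, hδ₁, h1⟩ := hT (ε/2) (by positivity)
  obtain ⟨δ₂, hδ₂, h2⟩ := hS (ε/2) (by positivity)
  refine ⟨min δ₁ δ₂, lt_min hδ₁ hδ₂, fun t ht => ?_⟩
  have e : U t * (T + S) - (T + S) = (U t * T - T) + (U t * S - S) := by
    rw [mul_add]; abel
  calc ‖U t * (T + S) - (T + S)‖ ≤ ‖U t * T - T‖ + ‖U t * S - S‖ := by
        rw [e]; exact norm_add_le _ _
    _ < ε/2 + ε/2 := add_lt_add (h1 t (lt_of_lt_of_le ht (min_le_left _ _)))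
        (h2 t (lt_of_lt_of_le ht (min_le_right _ _)))
    _ = ε := by ring

omit hU in
theorem contSet_smul (c : ℂ) {T : H →L[ℂ] H} (hT : T ∈ contSet U) : c • T ∈ contSet U := by
  intro ε hε
  obtain ⟨δ, hδ0, h1⟩ := hT (ε/(‖c‖+1)) (by positivity)
  refine ⟨δ, hδ0, fun t ht => ?_⟩
  have e : U t * (c • T) - c • T = c • (U t * T - T) := by
    rw [mul_smul_comm, smul_sub]
  rw [e, norm_smul]
  calc ‖c‖ * ‖U t * T - T‖ ≤ (‖c‖+1) * ‖U t * T - T‖ := by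
        apply mul_le_mul_of_nonneg_right (by linarith) (norm_nonneg _)
    _ < (‖c‖+1) * (ε/(‖c‖+1)) := by
        apply mul_lt_mul_of_pos_left (h1 t ht) (by positivity)
    _ = ε := by field_simp

omit hU in
theorem contSet_mul_right {T : H →L[ℂ] H} (hT : T ∈ contSet U) (S : H →L[ℂ] H) :
    T * S ∈ contSet U := by
  intro ε hε
  obtain ⟨δ, hδ0, h1⟩ := hT (ε/(‖S‖+1)) (by positivity)
  refine ⟨δ, hδ0, fun t ht => ?_⟩
  have e : U t * (T * S) - T * S = (U t * T - T) * S := by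
    rw [sub_mul, mul_assoc]
  rw [e]
  calc ‖(U t * T - T) * S‖ ≤ ‖U t * T - T‖ * ‖S‖ := norm_mul_le _ _
    _ ≤ (ε/(‖S‖+1)) * ‖S‖ := by
        apply mul_le_mul_of_nonneg_right (h1 t ht).le (norm_nonneg _)
    _ < ε := by
        rw [div_mul_eq_mul_div, div_lt_iff₀ (by positivity)]
        nlinarith [norm_nonneg S]

theorem contSet_closed : IsClosed (contSet U) := by
  refine isClosed_of_closure_subset fun T hT => ?_
  intro ε hε
  obtain ⟨T', hT', hdist⟩ := Metric.mem_closure_iff.mp hT (ε/3) (by positivity)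
  rw [dist_eq_norm] at hdist
  obtain ⟨δ, hδ0, h1⟩ := hT' (ε/3) (by positivity)
  refine ⟨δ, hδ0, fun t ht => ?_⟩
  have e : U t * T - T = U t * (T - T') + (U t * T' - T') + (T' - T) := by
    rw [mul_sub]; abel
  calc ‖U t * T - T‖ ≤ ‖U t * (T - T')‖ + ‖U t * T' - T'‖ + ‖T' - T‖ := by
        rw [e]; exact norm_add₃_le
    _ ≤ ‖U t‖ * ‖T - T'‖ + ‖U t * T' - T'‖ + ‖T' - T‖ := by
        gcongr; exact norm_mul_le _ _
    _ < 1 * (ε/3) + ε/3 + ε/3 := by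
        have h2 : ‖T' - T‖ < ε/3 := by rwa [norm_sub_rev]
        have hut := norm_U_le hU t
        have h3 := h1 t ht
        have hnn : (0:ℝ) ≤ ‖T - T'‖ := norm_nonneg _
        nlinarith [norm_nonneg (U t * T' - T')]
    _ = ε := by ring


theorem LU_subset_contSet : integratedAlgebra volume U ⊆ contSet U := by
  refine closure_minimal ?_ (contSet_closed hU)
  intro x hx
  have hx' : x ∈ NonUnitalAlgebra.adjoin ℂ (gen U ∪ star (gen U)) := hx
  refine NonUnitalAlgebra.adjoin_induction (fun y hy => ?_)
    (fun a b _ _ pa pb => contSet_add pa pb) (contSet_zero hU)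
    (fun a b _ _ pa _ => contSet_mul_right pa b)
    (fun c a _ pa => contSet_smul c pa) hx'
  rcases hy with hy | hy
  · exact gen_subset_contSet hU hy
  · have h1 : star y ∈ gen U := Set.mem_star.mp hy
    have h2 := gen_star_closed hU h1
    rw [star_star] at h2
    exact gen_subset_contSet hU h2

omit hU in
theorem subset_closedRightSpan {S : Set (H →L[ℂ] H)} : S ⊆ closedRightSpan S := by
  intro L hL
  exact subset_closure (Submodule.subset_span ⟨L, hL, 1, (mul_one L).symm⟩)

omit hU in
theorem closedRightSpan_mul_right {S : Set (H →L[ℂ] H)} {x : H →L[ℂ] H}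
    (hx : x ∈ closedRightSpan S) (b : H →L[ℂ] H) : x * b ∈ closedRightSpan S := by
  set p := Submodule.span ℂ
    {x : H →L[ℂ] H | ∃ L ∈ S, ∃ B : H →L[ℂ] H, x = L * B} with hp
  have hmap : ∀ y ∈ p, y * b ∈ p := by
    intro y hy
    induction hy using Submodule.span_induction with
    | mem y hy => rcases hy with ⟨L, hL, B, rfl⟩
                  exact Submodule.subset_span ⟨L, hL, B * b, by rw [mul_assoc]⟩
    | zero => simpa using p.zero_mem
    | add y z _ _ hy hz => simpa [add_mul] using p.add_mem hy hz
    | smul c y _ hy => simpa [smul_mul_assoc] using p.smul_mem c hy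
  have hcont : Continuous fun y : H →L[ℂ] H => y * b :=
    (ContinuousLinearMap.mul ℂ (H →L[ℂ] H)).flip b |>.continuous
  have : x ∈ closure ((fun y => y * b) ⁻¹' closure (p : Set (H →L[ℂ] H))) := by
    refine closure_mono (fun y hy => ?_) hx
    exact subset_closure (hmap y hy)
  have hcl : IsClosed ((fun y : H →L[ℂ] H => y * b) ⁻¹' closure (p : Set (H →L[ℂ] H))) :=
    isClosed_closure.preimage hcont
  exact hcl.closure_subset this

omit hU in
theorem closedRightSpan_absorb {S : Set (H →L[ℂ] H)} {b : H →L[ℂ] H}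
    (hb : ∀ L ∈ S, b * L ∈ closedRightSpan S) {x : H →L[ℂ] H}
    (hx : x ∈ closedRightSpan S) : b * x ∈ closedRightSpan S := by
  set p := Submodule.span ℂ
    {x : H →L[ℂ] H | ∃ L ∈ S, ∃ B : H →L[ℂ] H, x = L * B} with hp
  have hJmod : (closedRightSpan S) = ↑(p.topologicalClosure) := by
    rw [closedRightSpan, Submodule.topologicalClosure_coe]
  have hJsub : ∀ y ∈ p, b * y ∈ closedRightSpan S := by
    intro y hy
    induction hy using Submodule.span_induction with
    | mem y hy =>
        rcases hy with ⟨L, hL, B, rfl⟩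
        rw [← mul_assoc]
        exact closedRightSpan_mul_right (hb L hL) B
    | zero =>
        rw [mul_zero, hJmod]
        exact (p.topologicalClosure).zero_mem
    | add y z _ _ hy hz =>
        rw [hJmod] at hy hz ⊢
        rw [mul_add]
        simp only [SetLike.mem_coe] at hy hz ⊢
        exact add_mem hy hz
    | smul c y _ hy =>
        rw [hJmod] at hy ⊢
        rw [mul_smul_comm]
        simp only [SetLike.mem_coe] at hy ⊢
        exact Submodule.smul_mem _ c hy
  have hcont : Continuous fun y : H →L[ℂ] H => b * y :=
    (ContinuousLinearMap.mul ℂ (H →L[ℂ] H) b).continuous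
  have hcl : IsClosed ((fun y : H →L[ℂ] H => b * y) ⁻¹' closedRightSpan S) :=
    (isClosed_closure (s := (p : Set (H →L[ℂ] H)))).preimage hcont
  have hsub : (p : Set (H →L[ℂ] H)) ⊆ (fun y => b * y) ⁻¹' closedRightSpan S :=
    fun y hy => hJsub y hy
  have hsub2 : closedRightSpan S ⊆ closure ((fun y => b * y) ⁻¹' closedRightSpan S) := by
    rw [closedRightSpan]
    exact closure_mono hsub
  exact hcl.closure_subset (hsub2 hx)

theorem closedRightSpan_subset_contSet :
    closedRightSpan (integratedAlgebra volume U) ⊆ contSet U := by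
  refine closure_minimal ?_ (contSet_closed hU)
  intro x hx
  induction hx using Submodule.span_induction with
  | mem y hy =>
      rcases hy with ⟨L, hL, B, rfl⟩
      exact contSet_mul_right (LU_subset_contSet hU hL) B
  | zero => exact contSet_zero hU
  | add y z _ _ hy hz => exact contSet_add hy hz
  | smul c y _ hy => exact contSet_smul c hy


theorem contSet_subset_closedRightSpan :
    contSet U ⊆ closedRightSpan (integratedAlgebra volume U) := by
  intro T hT
  rw [closedRightSpan, Metric.mem_closure_iff]
  intro ε hε
  obtain ⟨δ, hδ0, hδ⟩ := hT (ε/2) (by positivity)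
  set δ' : ℝ := δ/2 with hδ'def
  have hδ'0 : 0 < δ' := by positivity
  set f : ℝ → ℂ := (Set.Ioc (0:ℝ) δ').indicator (fun _ => ((δ':ℝ)⁻¹ : ℂ)) with hfdef
  have hfin : volume (Set.Ioc (0:ℝ) δ') < ⊤ := by
    rw [Real.volume_Ioc]
    exact ENNReal.ofReal_lt_top
  have hfint : Integrable f := by
    rw [hfdef, integrable_indicator_iff measurableSet_Ioc]
    exact integrableOn_const hfin.ne
  have hfone : ∫ s, f s = 1 := by
    rw [hfdef, integral_indicator_const _ measurableSet_Ioc, measureReal_def, Real.volume_Ioc, sub_zero,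
      ENNReal.toReal_ofReal hδ'0.le, Complex.real_smul, ← Complex.ofReal_inv,
      ← Complex.ofReal_mul, mul_inv_cancel₀ hδ'0.ne', Complex.ofReal_one]
  have hfnorm : ∫ s, ‖f s‖ = 1 := by
    have he : (fun s => ‖f s‖) = (Set.Ioc (0:ℝ) δ').indicator (fun _ => ‖((δ':ℝ)⁻¹ : ℂ)‖) := by
      funext s
      rw [hfdef, ← norm_indicator_eq_indicator_norm]
    rw [he, integral_indicator_const _ measurableSet_Ioc, measureReal_def, Real.volume_Ioc, sub_zero,
      ENNReal.toReal_ofReal hδ'0.le, smul_eq_mul, norm_inv, Complex.norm_real,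
      Real.norm_eq_abs, abs_of_pos hδ'0, mul_inv_cancel₀ hδ'0.ne']
  set S : H →L[ℂ] H := integOp hU f hfint with hSdef
  have hSgen : S ∈ gen U := ⟨f, hfint, fun ψ => rfl⟩
  have hSLU : S ∈ integratedAlgebra volume U :=
    subset_closure (NonUnitalStarAlgebra.subset_adjoin ℂ _ hSgen)
  refine ⟨S * T, Submodule.subset_span ⟨S, hSLU, T, rfl⟩, ?_⟩
  rw [dist_eq_norm]
  have hbound : ‖T - S * T‖ ≤ ε/2 := by
    refine ContinuousLinearMap.opNorm_le_bound _ (by positivity) fun ψ => ?_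
    have i1 : Integrable (fun s => f s • T ψ) := hfint.smul_const (T ψ)
    have i2 : Integrable (fun s => f s • U s (T ψ)) := integrable_smul hU hfint (T ψ)
    have e1 : (T - S * T) ψ = ∫ s, f s • (T ψ - U s (T ψ)) := by
      rw [ContinuousLinearMap.sub_apply, ContinuousLinearMap.mul_apply, hSdef, integOp_apply]
      have hTψ : T ψ = ∫ s, f s • T ψ := by rw [integral_smul_const, hfone, one_smul]
      nth_rewrite 1 [hTψ]
      rw [← integral_sub i1 i2]
      congr 1; funext s; rw [smul_sub]
    rw [e1]
    have hpt : ∀ s, ‖f s • (T ψ - U s (T ψ))‖ ≤ ‖f s‖ * (ε/2 * ‖ψ‖) := by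
      intro s
      rw [norm_smul]
      by_cases hs : s ∈ Set.Ioc (0:ℝ) δ'
      · have hlt : ‖U s * T - T‖ < ε/2 := by
          refine hδ s ?_
          rw [abs_of_pos hs.1]
          refine lt_of_le_of_lt hs.2 ?_
          rw [hδ'def]; linarith
        have h2 : ‖T ψ - U s (T ψ)‖ ≤ ‖U s * T - T‖ * ‖ψ‖ := by
          rw [norm_sub_rev]
          have h3 := (U s * T - T).le_opNorm ψ
          simpa [ContinuousLinearMap.sub_apply, ContinuousLinearMap.mul_apply] using h3
        refine mul_le_mul_of_nonneg_left ?_ (norm_nonneg _)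
        exact h2.trans (mul_le_mul_of_nonneg_right hlt.le (norm_nonneg _))
      · have h0 : f s = 0 := by rw [hfdef]; exact Set.indicator_of_notMem hs _
        rw [h0]
        simp
    calc ‖∫ s, f s • (T ψ - U s (T ψ))‖ ≤ ∫ s, ‖f s • (T ψ - U s (T ψ))‖ :=
          norm_integral_le_integral_norm _
      _ ≤ ∫ s, ‖f s‖ * (ε/2 * ‖ψ‖) := by
          refine integral_mono_of_nonneg ?_ (hfint.norm.mul_const _) ?_
          · filter_upwards with s; positivity
          · filter_upwards with s; exact hpt s
      _ = (∫ s, ‖f s‖) * (ε/2 * ‖ψ‖) := integral_mul_const _ _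
      _ = ε/2 * ‖ψ‖ := by rw [hfnorm, one_mul]
  exact lt_of_le_of_lt hbound (by linarith)

omit hU in
theorem contSet_subset_of_bound {U' : ℝ → H →L[ℂ] H} {C : ℝ} (hC : 0 ≤ C)
    (hbd : ∀ t, ‖U' t - U t‖ ≤ C * |t|) : contSet U ⊆ contSet U' := by
  intro T hT ε hε
  obtain ⟨δ, hδ0, h1⟩ := hT (ε/2) (by positivity)
  refine ⟨min δ (ε/(2*(C*‖T‖+1))), lt_min hδ0 (by positivity), fun t ht => ?_⟩
  have ht1 : |t| < δ := lt_of_lt_of_le ht (min_le_left _ _)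
  have ht2 : |t| < ε/(2*(C*‖T‖+1)) := lt_of_lt_of_le ht (min_le_right _ _)
  have e : U' t * T - T = (U' t - U t) * T + (U t * T - T) := by
    rw [sub_mul]; abel
  have hTn : (0:ℝ) ≤ ‖T‖ := norm_nonneg _
  calc ‖U' t * T - T‖ ≤ ‖(U' t - U t) * T‖ + ‖U t * T - T‖ := by
        rw [e]; exact norm_add_le _ _
    _ ≤ ‖U' t - U t‖ * ‖T‖ + ‖U t * T - T‖ := by
        gcongr; exact norm_mul_le _ _
    _ < C * |t| * ‖T‖ + ε/2 :=
        add_lt_add_of_le_of_lt (mul_le_mul_of_nonneg_right (hbd t) hTn) (h1 t ht1)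
    _ ≤ ε/2 + ε/2 := by
        have h5 : C * |t| * ‖T‖ ≤ (C*‖T‖+1) * |t| := by nlinarith [abs_nonneg t]
        have hpos : (0:ℝ) < C*‖T‖+1 := by positivity
        have h6 : (C*‖T‖+1) * |t| < ε/2 := by
          calc (C*‖T‖+1) * |t| < (C*‖T‖+1) * (ε/(2*(C*‖T‖+1))) :=
                mul_lt_mul_of_pos_left ht2 hpos
            _ = ε/2 := by field_simp
        linarith
    _ = ε := by ring

theorem closedRightSpan_eq_of_pert {U' : ℝ → H →L[ℂ] H} (hU' : IsUnitaryOneParam U')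
    (B : H →L[ℂ] H)
    (hD : ∀ (t : ℝ) (ψ : H),
      U' t ψ = U t ψ + Complex.I • ∫ s in (0:ℝ)..t, U (t - s) (B (U' s ψ))) :
    closedRightSpan (integratedAlgebra volume U) =
      closedRightSpan (integratedAlgebra volume U') := by
  have hbd : ∀ t, ‖U' t - U t‖ ≤ ‖B‖ * |t| := by
    intro t
    refine ContinuousLinearMap.opNorm_le_bound _ (by positivity) fun ψ => ?_
    rw [ContinuousLinearMap.sub_apply, hD t ψ, add_sub_cancel_left, norm_smul, Complex.norm_I,
      one_mul]
    calc ‖∫ s in (0:ℝ)..t, U (t - s) (B (U' s ψ))‖ ≤ (‖B‖ * ‖ψ‖) * |t - 0| := by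
          refine intervalIntegral.norm_integral_le_of_norm_le_const fun x _ => ?_
          rw [norm_U_apply hU]
          calc ‖B (U' x ψ)‖ ≤ ‖B‖ * ‖U' x ψ‖ := B.le_opNorm _
            _ = ‖B‖ * ‖ψ‖ := by rw [norm_U_apply hU']
      _ = ‖B‖ * |t| * ‖ψ‖ := by rw [sub_zero]; ring
  have hbd' : ∀ t, ‖U t - U' t‖ ≤ ‖B‖ * |t| := fun t => by
    rw [norm_sub_rev]; exact hbd t
  have hcs : contSet U = contSet U' :=
    Set.Subset.antisymm (contSet_subset_of_bound (norm_nonneg B) hbd)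
      (contSet_subset_of_bound (norm_nonneg B) hbd')
  apply Set.Subset.antisymm
  · refine (closedRightSpan_subset_contSet hU).trans ?_
    rw [hcs]
    exact contSet_subset_closedRightSpan hU'
  · refine (closedRightSpan_subset_contSet hU').trans ?_
    rw [← hcs]
    exact contSet_subset_closedRightSpan hU

end CrossAux


/-- Cross representations are stable under bounded self-adjoint
perturbations of the generator: if `U'` is the unitary group generated by `H + B`
(expressed by the Duhamel relation), then the cross-domains with respect to `U`
and `U'` coincide; in particular `(A,U)` is cross iff `(A,U')` is cross. -/
theorem cross_stable_under_bounded_perturbation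
    (U U' : ℝ → H →L[ℂ] H) (hU : IsUnitaryOneParam U) (hU' : IsUnitaryOneParam U')
    (B : H →L[ℂ] H) (hB : IsSelfAdjoint B)
    (hDuhamel : ∀ (t : ℝ) (ψ : H),
      U' t ψ = U t ψ + Complex.I • ∫ s in (0:ℝ)..t, U (t - s) (B (U' s ψ)))
    (A : NonUnitalStarSubalgebra ℂ (H →L[ℂ] H))
    (hAclosed : IsClosed (A : Set (H →L[ℂ] H)))
    (hAinv : ∀ t : ℝ, (fun a => U t * a * star (U t)) '' (A : Set (H →L[ℂ] H)) = A)
    (hAinv' : ∀ t : ℝ, (fun a => U' t * a * star (U' t)) '' (A : Set (H →L[ℂ] H)) = A) :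
    {a : H →L[ℂ] H | a ∈ A ∧ ∀ b ∈ ({a, star a} : Set (H →L[ℂ] H)),
        ∀ L ∈ integratedAlgebra (volume : Measure ℝ) U,
          b * L ∈ closedRightSpan (integratedAlgebra (volume : Measure ℝ) U)} =
      {a : H →L[ℂ] H | a ∈ A ∧ ∀ b ∈ ({a, star a} : Set (H →L[ℂ] H)),
        ∀ L ∈ integratedAlgebra (volume : Measure ℝ) U',
          b * L ∈ closedRightSpan (integratedAlgebra (volume : Measure ℝ) U')} ∧
    (IsCrossRep (A : Set (H →L[ℂ] H)) (integratedAlgebra (volume : Measure ℝ) U) ↔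
      IsCrossRep (A : Set (H →L[ℂ] H)) (integratedAlgebra (volume : Measure ℝ) U')) := by
  have hJ : closedRightSpan (integratedAlgebra (volume : Measure ℝ) U) =
      closedRightSpan (integratedAlgebra (volume : Measure ℝ) U') :=
    CrossAux.closedRightSpan_eq_of_pert hU hU' B hDuhamel
  have main : ∀ b : H →L[ℂ] H,
      (∀ L ∈ integratedAlgebra (volume : Measure ℝ) U,
        b * L ∈ closedRightSpan (integratedAlgebra (volume : Measure ℝ) U)) →
      ∀ L ∈ integratedAlgebra (volume : Measure ℝ) U',
        b * L ∈ closedRightSpan (integratedAlgebra (volume : Measure ℝ) U') := by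
    intro b hb L hL
    rw [← hJ]
    refine CrossAux.closedRightSpan_absorb hb ?_
    rw [hJ]
    exact CrossAux.subset_closedRightSpan hL
  have main' : ∀ b : H →L[ℂ] H,
      (∀ L ∈ integratedAlgebra (volume : Measure ℝ) U',
        b * L ∈ closedRightSpan (integratedAlgebra (volume : Measure ℝ) U')) →
      ∀ L ∈ integratedAlgebra (volume : Measure ℝ) U,
        b * L ∈ closedRightSpan (integratedAlgebra (volume : Measure ℝ) U) := by
    intro b hb L hL
    rw [hJ]
    refine CrossAux.closedRightSpan_absorb hb ?_
    rw [← hJ]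
    exact CrossAux.subset_closedRightSpan hL
  constructor
  · ext a
    simp only [Set.mem_setOf_eq]
    constructor
    · rintro ⟨haA, h⟩
      exact ⟨haA, fun b hb => main b (h b hb)⟩
    · rintro ⟨haA, h⟩
      exact ⟨haA, fun b hb => main' b (h b hb)⟩
  · constructor
    · intro h a ha
      exact main a (h a ha)
    · intro h a ha
      exact main' a (h a ha)
end
end

section
/- Let 𝓗 be a complex Hilbert space, U : ℝ → U(𝓗) a strongly continuous one-parameter unitary group, and A ⊆ B(𝓗) a C*-subalgebra with U_t A U_t⁻¹ = A for all t, and assume (A,U) is a cross representation, i.e. A·𝔏_U ⊆ closed linear span of 𝔏_U·B(𝓗). If 𝔏₋·A is contained in the closed linear span of A·𝔏₋, then the closed linear span C₋ of A·𝔏₋ is a closed two-sided ideal of the C*-subalgebra C of B(𝓗) generated by A·𝔏_U, C₋ coincides with the C*-subalgebra generated by A·𝔏₋, and moreover 𝔏₋·C ⊆ C₋. -/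
open MeasureTheory Filter

noncomputable section

variable {H : Type*} [NormedAddCommGroup H] [InnerProductSpace ℂ H] [CompleteSpace H]

/-- `f ∈ L¹(ℝ)` whose Fourier transform `λ ↦ ∫ f(t)e^{itλ} dt` vanishes for all `λ ≥ 0`. -/
def NegSpectralFun (f : ℝ → ℂ) : Prop :=
  Integrable f ∧ ∀ l : ℝ, 0 ≤ l →
    (∫ t : ℝ, f t * Complex.exp (Complex.I * (t : ℂ) * (l : ℂ))) = 0

/-- `𝔏₋`: the closed linear span of `{U(f) : f ∈ L¹(ℝ), f̂ vanishes on [0,∞)}`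
(the image of the ideal `C₀((−∞,0))` of `C*(ℝ)`). -/
def negPartAlgebra (U : ℝ → H →L[ℂ] H) : Set (H →L[ℂ] H) :=
  closure (↑(Submodule.span ℂ
    {T : H →L[ℂ] H | ∃ f : ℝ → ℂ, NegSpectralFun f ∧ ∀ ψ : H, T ψ = ∫ t, f t • U t ψ}) :
    Set (H →L[ℂ] H))


section AuxiliaryLemmas

open ComplexConjugate Convolution

variable {U : ℝ → H →L[ℂ] H}

lemma U_zero (hU : IsUnitaryOneParam U) : U 0 = 1 := by
  have h := hU.2.1 0 0
  rw [add_zero] at h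
  have h1 : star (U 0) * U 0 = 1 := (Unitary.mem_iff.mp (hU.1 0)).1
  calc U 0 = (star (U 0) * U 0) * U 0 := by rw [h1, one_mul]
    _ = star (U 0) * (U 0 * U 0) := by rw [mul_assoc]
    _ = 1 := by rw [← h, h1]

lemma U_star (hU : IsUnitaryOneParam U) (t : ℝ) : star (U t) = U (-t) := by
  have h1 : star (U t) * U t = 1 := (Unitary.mem_iff.mp (hU.1 t)).1
  have h2 : U t * U (-t) = 1 := by rw [← hU.2.1, add_neg_cancel, U_zero hU]
  calc star (U t) = star (U t) * (U t * U (-t)) := by rw [h2, mul_one]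
    _ = (star (U t) * U t) * U (-t) := by rw [mul_assoc]
    _ = U (-t) := by rw [h1, one_mul]

lemma U_norm (hU : IsUnitaryOneParam U) (t : ℝ) (ψ : H) : ‖U t ψ‖ = ‖ψ‖ :=
  ContinuousLinearMap.norm_map_of_mem_unitary (hU.1 t) ψ

lemma integrable_smul_U (hU : IsUnitaryOneParam U) {f : ℝ → ℂ} (hf : Integrable f) (ψ : H) :
    Integrable (fun t => f t • U t ψ) := by
  refine Integrable.mono' (hf.norm.mul_const ‖ψ‖)
    (hf.aestronglyMeasurable.smul (hU.2.2 ψ).aestronglyMeasurable)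
    (Eventually.of_forall fun t => ?_)
  rw [norm_smul, U_norm hU]

lemma integrable_conj_neg {f : ℝ → ℂ} (hf : Integrable f) :
    Integrable (fun t => conj (f (-t))) := by
  have hneg := hf.comp_neg (μ := (volume : Measure ℝ))
  exact hneg.norm.mono' (RCLike.continuous_conj.comp_aestronglyMeasurable
    hneg.aestronglyMeasurable) (Eventually.of_forall fun t => by simp)

lemma star_rep (hU : IsUnitaryOneParam U) {f : ℝ → ℂ} (hf : Integrable f)
    {T : H →L[ℂ] H} (hT : ∀ ψ : H, T ψ = ∫ t, f t • U t ψ) (ψ : H) :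
    (star T) ψ = ∫ t, (conj (f (-t))) • U t ψ := by
  have hf' : Integrable (fun t => conj (f (-t))) := integrable_conj_neg hf
  apply ext_inner_right ℂ
  intro v
  rw [ContinuousLinearMap.star_eq_adjoint, ContinuousLinearMap.adjoint_inner_left, hT v]
  calc inner ℂ (ψ : H) (∫ t, f t • U t v : H)
      = ∫ t, inner ℂ ψ (f t • U t v) := (integral_inner (integrable_smul_U hU hf v) ψ).symm
    _ = ∫ t, f t * inner ℂ ψ (U t v) := by simp_rw [inner_smul_right]
    _ = ∫ t, f (-t) * inner ℂ ψ (U (-t) v) := (integral_neg_eq_self _ _).symm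
    _ = ∫ t, conj ((conj (f (-t))) * inner ℂ (U (-t) v) ψ) := by
        refine integral_congr_ae (Eventually.of_forall fun t => ?_)
        show f (-t) * inner ℂ ψ (U (-t) v)
          = conj ((conj (f (-t))) * inner ℂ (U (-t) v) ψ)
        rw [map_mul, starRingEnd_self_apply, inner_conj_symm]
    _ = conj (∫ t, (conj (f (-t))) * inner ℂ (U (-t) v) ψ) := integral_conj
    _ = conj (∫ t, inner ℂ v ((conj (f (-t))) • U t ψ)) := by
        congr 1
        refine integral_congr_ae (Eventually.of_forall fun t => ?_)
        show (conj (f (-t))) * inner ℂ (U (-t) v) ψ = inner ℂ v ((conj (f (-t))) • U t ψ)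
        rw [inner_smul_right]
        congr 1
        rw [← U_star hU, ContinuousLinearMap.star_eq_adjoint,
          ContinuousLinearMap.adjoint_inner_left]
    _ = conj (inner ℂ v (∫ t, (conj (f (-t))) • U t ψ : H)) := by
        rw [integral_inner (integrable_smul_U hU hf' ψ) v]
    _ = inner ℂ (∫ t, (conj (f (-t))) • U t ψ : H) v := by rw [inner_conj_symm]

lemma conv_integrand_integrable (hU : IsUnitaryOneParam U) {f g : ℝ → ℂ}
    (hf : Integrable f) (hg : Integrable g) (ψ : H) :
    Integrable (Function.uncurry fun s u => (f s * g (u - s)) • U u ψ)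
      ((volume : Measure ℝ).prod volume) := by
  have hc : Integrable (fun p : ℝ × ℝ => f p.2 * g (p.1 - p.2))
      ((volume : Measure ℝ).prod volume) := by
    have := hf.convolution_integrand (ContinuousLinearMap.mul ℂ ℂ) hg
    simpa using this
  have hc' : Integrable (fun p : ℝ × ℝ => f p.1 * g (p.2 - p.1))
      ((volume : Measure ℝ).prod volume) := hc.swap
  refine hc'.norm.mul_const ‖ψ‖ |>.mono' ?_ (Eventually.of_forall fun p => ?_)
  · exact hc'.aestronglyMeasurable.smul
      (((hU.2.2 ψ).comp continuous_snd).aestronglyMeasurable)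
  · show ‖(f p.1 * g (p.2 - p.1)) • U p.2 ψ‖ ≤ _
    rw [norm_smul, U_norm hU]

lemma mul_rep (hU : IsUnitaryOneParam U) {f g : ℝ → ℂ} (hf : Integrable f) (hg : Integrable g)
    {T T' : H →L[ℂ] H} (hT : ∀ ψ : H, T ψ = ∫ t, f t • U t ψ)
    (hT' : ∀ ψ : H, T' ψ = ∫ t, g t • U t ψ) (ψ : H) :
    (T * T') ψ = ∫ u, (f ⋆[ContinuousLinearMap.mul ℂ ℂ] g) u • U u ψ := by
  rw [ContinuousLinearMap.mul_apply, hT, hT']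
  calc (∫ s, f s • U s (∫ t, g t • U t ψ))
      = ∫ s, ∫ u, (f s * g (u - s)) • U u ψ := by
        refine integral_congr_ae (Eventually.of_forall fun s => ?_)
        show f s • U s (∫ t, g t • U t ψ) = ∫ u, (f s * g (u - s)) • U u ψ
        rw [← ContinuousLinearMap.integral_comp_comm _ (integrable_smul_U hU hg ψ),
          ← integral_smul]
        have : (fun t => f s • (U s) (g t • U t ψ)) =
            fun t => (fun u => (f s * g (u - s)) • U u ψ) (s + t) := by
          funext t
          simp only [add_sub_cancel_left]
          rw [_root_.map_smul, smul_smul, ← ContinuousLinearMap.mul_apply, ← hU.2.1]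
        rw [this]
        exact integral_add_left_eq_self (fun u => (f s * g (u - s)) • U u ψ) s
    _ = ∫ u, ∫ s, (f s * g (u - s)) • U u ψ :=
        integral_integral_swap (conv_integrand_integrable hU hf hg ψ)
    _ = ∫ u, (f ⋆[ContinuousLinearMap.mul ℂ ℂ] g) u • U u ψ := by
        refine integral_congr_ae (Eventually.of_forall fun u => ?_)
        show (∫ s, (f s * g (u - s)) • U u ψ)
          = (f ⋆[ContinuousLinearMap.mul ℂ ℂ] g) u • U u ψ
        rw [convolution_def]
        simp only [ContinuousLinearMap.mul_apply']
        exact integral_smul_const _ _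

lemma conv_fourier {f g : ℝ → ℂ} (hf : Integrable f) (hg : Integrable g) (l : ℝ) :
    (∫ u : ℝ, (f ⋆[ContinuousLinearMap.mul ℂ ℂ] g) u * Complex.exp (Complex.I * u * l)) =
      (∫ t : ℝ, f t * Complex.exp (Complex.I * t * l)) *
        (∫ t : ℝ, g t * Complex.exp (Complex.I * t * l)) := by
  set e : ℝ → ℂ := fun u => Complex.exp (Complex.I * u * l) with he
  have hecont : Continuous e := by
    apply Complex.continuous_exp.comp
    exact (continuous_const.mul Complex.continuous_ofReal).mul continuous_const
  have henorm : ∀ u : ℝ, ‖e u‖ = 1 := by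
    intro u
    rw [he]
    simp only [Complex.norm_exp]
    have : (Complex.I * u * l).re = 0 := by simp
    rw [this, Real.exp_zero]
  have hc' : Integrable (fun p : ℝ × ℝ => f p.1 * g (p.2 - p.1))
      ((volume : Measure ℝ).prod volume) := by
    have := hf.convolution_integrand (ContinuousLinearMap.mul ℂ ℂ) hg
    exact (by simpa using this : Integrable (fun p : ℝ × ℝ => f p.2 * g (p.1 - p.2))
      ((volume : Measure ℝ).prod volume)).swap
  have hint : Integrable (Function.uncurry fun s u => f s * g (u - s) * e u)
      ((volume : Measure ℝ).prod volume) := by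
    refine hc'.norm.mono' ?_ (Eventually.of_forall fun p => ?_)
    · exact hc'.aestronglyMeasurable.mul
        ((hecont.comp continuous_snd).aestronglyMeasurable)
    · show ‖f p.1 * g (p.2 - p.1) * e p.2‖ ≤ _
      rw [norm_mul, henorm, mul_one]
  calc (∫ u : ℝ, (f ⋆[ContinuousLinearMap.mul ℂ ℂ] g) u * e u)
      = ∫ u : ℝ, ∫ s : ℝ, f s * g (u - s) * e u := by
        refine integral_congr_ae (Eventually.of_forall fun u => ?_)
        show (f ⋆[ContinuousLinearMap.mul ℂ ℂ] g) u * e u = _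
        rw [convolution_def]
        simp only [ContinuousLinearMap.mul_apply']
        exact (integral_mul_const (e u) _).symm
    _ = ∫ s : ℝ, ∫ u : ℝ, f s * g (u - s) * e u := (integral_integral_swap hint).symm
    _ = ∫ s : ℝ, (f s * e s) * ∫ u : ℝ, g u * e u := by
        refine integral_congr_ae (Eventually.of_forall fun s => ?_)
        show (∫ u : ℝ, f s * g (u - s) * e u) = (f s * e s) * ∫ u : ℝ, g u * e u
        have h1 : (fun u => f s * g (u - s) * e u) =
            fun u => (fun v => f s * g v * e (v + s)) (u - s) := by
          funext u
          show f s * g (u - s) * e u = f s * g (u - s) * e (u - s + s)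
          rw [sub_add_cancel]
        rw [h1, integral_sub_right_eq_self (fun v => f s * g v * e (v + s)) s]
        have h2 : (fun v => f s * g v * e (v + s)) = fun v => (f s * e s) * (g v * e v) := by
          funext v
          rw [he]
          show f s * g v * Complex.exp (Complex.I * (↑(v + s)) * l) = _
          rw [show Complex.I * (↑(v + s) : ℂ) * l
              = Complex.I * v * l + Complex.I * s * l by push_cast; ring,
            Complex.exp_add]
          ring
        rw [h2, integral_const_mul]
    _ = (∫ t : ℝ, f t * e t) * ∫ t : ℝ, g t * e t := integral_mul_const _ _

lemma negspec_star {f : ℝ → ℂ} (hf : NegSpectralFun f) :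
    NegSpectralFun (fun t => conj (f (-t))) := by
  refine ⟨integrable_conj_neg hf.1, fun l hl => ?_⟩
  have key : ∀ t : ℝ, conj (f (-t)) * Complex.exp (Complex.I * t * l)
      = conj ((fun s => f s * Complex.exp (Complex.I * s * l)) (-t)) := by
    intro t
    show _ = conj (f (-t) * Complex.exp (Complex.I * (-t : ℝ) * l))
    rw [map_mul, ← Complex.exp_conj]
    congr 2
    simp only [Complex.ofReal_neg]
    simp only [map_mul, map_neg, Complex.conj_I, Complex.conj_ofReal]
    ring
  calc (∫ t : ℝ, conj (f (-t)) * Complex.exp (Complex.I * t * l))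
      = ∫ t : ℝ, conj ((fun s => f s * Complex.exp (Complex.I * s * l)) (-t)) :=
        integral_congr_ae (Eventually.of_forall fun t => key t)
    _ = conj (∫ t : ℝ, (fun s => f s * Complex.exp (Complex.I * s * l)) (-t)) := integral_conj
    _ = conj (∫ t : ℝ, f t * Complex.exp (Complex.I * t * l)) := by
        rw [integral_neg_eq_self (fun s => f s * Complex.exp (Complex.I * s * l)) volume]
    _ = 0 := by rw [hf.2 l hl, map_zero]

lemma negspec_conv_left {f g : ℝ → ℂ} (hf : NegSpectralFun f) (hg : Integrable g) :
    NegSpectralFun (f ⋆[ContinuousLinearMap.mul ℂ ℂ] g) :=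
  ⟨hf.1.integrable_convolution _ hg, fun l hl => by
    rw [conv_fourier hf.1 hg l, hf.2 l hl, zero_mul]⟩

lemma negspec_conv_right {f g : ℝ → ℂ} (hf : Integrable f) (hg : NegSpectralFun g) :
    NegSpectralFun (f ⋆[ContinuousLinearMap.mul ℂ ℂ] g) :=
  ⟨hf.integrable_convolution _ hg.1, fun l hl => by
    rw [conv_fourier hf hg.1 l, hg.2 l hl, mul_zero]⟩

/-! ### Set-level lemmas for the generating sets -/

/-- The generating set of `integratedAlgebra volume U`. -/
def UGenSet (U : ℝ → H →L[ℂ] H) : Set (H →L[ℂ] H) :=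
  {T : H →L[ℂ] H | ∃ f : ℝ → ℂ, Integrable f (volume : Measure ℝ) ∧
    ∀ ψ : H, T ψ = ∫ g, f g • U g ψ ∂(volume : Measure ℝ)}

/-- The generating set of `negPartAlgebra U`. -/
def UNegSet (U : ℝ → H →L[ℂ] H) : Set (H →L[ℂ] H) :=
  {T : H →L[ℂ] H | ∃ f : ℝ → ℂ, NegSpectralFun f ∧ ∀ ψ : H, T ψ = ∫ t, f t • U t ψ}

lemma integratedAlgebra_eq : integratedAlgebra (volume : Measure ℝ) U
    = closure (↑(NonUnitalStarAlgebra.adjoin ℂ (UGenSet U)) : Set (H →L[ℂ] H)) := rfl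

lemma negPartAlgebra_eq : negPartAlgebra U
    = closure (↑(Submodule.span ℂ (UNegSet U)) : Set (H →L[ℂ] H)) := rfl

lemma UNegSet_subset : UNegSet U ⊆ UGenSet U := fun _ ⟨f, hf, hT⟩ => ⟨f, hf.1, hT⟩

lemma UGenSet_star (hU : IsUnitaryOneParam U) {T : H →L[ℂ] H} (h : T ∈ UGenSet U) :
    star T ∈ UGenSet U := by
  obtain ⟨f, hf, hT⟩ := h
  exact ⟨fun t => conj (f (-t)), integrable_conj_neg hf, star_rep hU hf hT⟩

lemma UNegSet_star (hU : IsUnitaryOneParam U) {T : H →L[ℂ] H} (h : T ∈ UNegSet U) :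
    star T ∈ UNegSet U := by
  obtain ⟨f, hf, hT⟩ := h
  exact ⟨fun t => conj (f (-t)), negspec_star hf, star_rep hU hf.1 hT⟩

lemma UNegSet_mul_right (hU : IsUnitaryOneParam U) {T T' : H →L[ℂ] H}
    (h : T ∈ UNegSet U) (h' : T' ∈ UGenSet U) : T * T' ∈ UNegSet U := by
  obtain ⟨f, hf, hT⟩ := h
  obtain ⟨g, hg, hT'⟩ := h'
  exact ⟨f ⋆[ContinuousLinearMap.mul ℂ ℂ] g, negspec_conv_left hf hg,
    mul_rep hU hf.1 hg hT hT'⟩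

lemma UNegSet_mul_left (hU : IsUnitaryOneParam U) {T T' : H →L[ℂ] H}
    (h : T ∈ UGenSet U) (h' : T' ∈ UNegSet U) : T * T' ∈ UNegSet U := by
  obtain ⟨f, hf, hT⟩ := h
  obtain ⟨g, hg, hT'⟩ := h'
  exact ⟨f ⋆[ContinuousLinearMap.mul ℂ ℂ] g, negspec_conv_right hf hg,
    mul_rep hU hf hg.1 hT hT'⟩

/-! ### Closure-level lemmas -/

lemma cspan_zero_mem (s : Set (H →L[ℂ] H)) :
    (0 : H →L[ℂ] H) ∈ closure (↑(Submodule.span ℂ s) : Set (H →L[ℂ] H)) :=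
  subset_closure (Submodule.zero_mem _)

lemma cspan_add_mem {s : Set (H →L[ℂ] H)} {x y : H →L[ℂ] H}
    (hx : x ∈ closure (↑(Submodule.span ℂ s) : Set (H →L[ℂ] H)))
    (hy : y ∈ closure (↑(Submodule.span ℂ s) : Set (H →L[ℂ] H))) :
    x + y ∈ closure (↑(Submodule.span ℂ s) : Set (H →L[ℂ] H)) := by
  rw [← Submodule.topologicalClosure_coe] at hx hy ⊢
  exact Submodule.add_mem _ hx hy

lemma cspan_smul_mem {s : Set (H →L[ℂ] H)} (c : ℂ) {x : H →L[ℂ] H}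
    (hx : x ∈ closure (↑(Submodule.span ℂ s) : Set (H →L[ℂ] H))) :
    c • x ∈ closure (↑(Submodule.span ℂ s) : Set (H →L[ℂ] H)) := by
  rw [← Submodule.topologicalClosure_coe] at hx ⊢
  exact Submodule.smul_mem _ _ hx

lemma negPart_isClosed : IsClosed (negPartAlgebra U) := isClosed_closure

lemma negPart_subset : negPartAlgebra U ⊆ integratedAlgebra (volume : Measure ℝ) U := by
  rw [negPartAlgebra_eq, integratedAlgebra_eq]
  apply closure_mono
  intro x hx
  have hx' : x ∈ Submodule.span ℂ (UNegSet U) := hx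
  clear hx
  show x ∈ NonUnitalStarAlgebra.adjoin ℂ (UGenSet U)
  induction hx' using Submodule.span_induction with
  | mem w hw => exact NonUnitalStarAlgebra.subset_adjoin ℂ _ (UNegSet_subset hw)
  | zero => exact zero_mem _
  | add u v _ _ hu hv => exact add_mem hu hv
  | smul c u _ hu => exact SMulMemClass.smul_mem c hu

lemma negPart_star (hU : IsUnitaryOneParam U) {x : H →L[ℂ] H}
    (hx : x ∈ negPartAlgebra U) : star x ∈ negPartAlgebra U := by
  rw [negPartAlgebra_eq] at hx ⊢
  refine map_mem_closure continuous_star hx ?_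
  intro z hz
  have hz' : z ∈ Submodule.span ℂ (UNegSet U) := hz
  clear hz
  show star z ∈ Submodule.span ℂ (UNegSet U)
  induction hz' using Submodule.span_induction with
  | mem w hw => exact Submodule.subset_span (UNegSet_star hU hw)
  | zero => rw [star_zero]; exact Submodule.zero_mem _
  | add u v _ _ hu hv => rw [star_add]; exact Submodule.add_mem _ hu hv
  | smul c u _ hu => rw [star_smul]; exact Submodule.smul_mem _ _ hu

lemma integrated_star (hU : IsUnitaryOneParam U) {y : H →L[ℂ] H}
    (hy : y ∈ integratedAlgebra (volume : Measure ℝ) U) :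
    star y ∈ integratedAlgebra (volume : Measure ℝ) U := by
  rw [integratedAlgebra_eq] at hy ⊢
  refine map_mem_closure continuous_star hy ?_
  intro z hz
  have hz' : z ∈ NonUnitalStarAlgebra.adjoin ℂ (UGenSet U) := hz
  show star z ∈ NonUnitalStarAlgebra.adjoin ℂ (UGenSet U)
  exact star_mem hz'

lemma negPart_mul (hU : IsUnitaryOneParam U) :
    ∀ y ∈ integratedAlgebra (volume : Measure ℝ) U, ∀ x ∈ negPartAlgebra U,
      x * y ∈ negPartAlgebra U ∧ y * x ∈ negPartAlgebra U := by
  have hN_r : ∀ T' ∈ UGenSet U, ∀ x ∈ negPartAlgebra U, x * T' ∈ negPartAlgebra U := by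
    intro T' hT' x hx
    rw [negPartAlgebra_eq] at hx ⊢
    refine map_mem_closure (f := fun b => b * T') (continuous_mul_right T') hx ?_
    intro z hz
    have hz' : z ∈ Submodule.span ℂ (UNegSet U) := hz
    clear hz
    show z * T' ∈ Submodule.span ℂ (UNegSet U)
    induction hz' using Submodule.span_induction with
    | mem w hw => exact Submodule.subset_span (UNegSet_mul_right hU hw hT')
    | zero => rw [zero_mul]; exact Submodule.zero_mem _
    | add u v _ _ hu hv => rw [add_mul]; exact Submodule.add_mem _ hu hv
    | smul c u _ hu => rw [smul_mul_assoc]; exact Submodule.smul_mem _ _ hu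
  have hN_l : ∀ T' ∈ UGenSet U, ∀ x ∈ negPartAlgebra U, T' * x ∈ negPartAlgebra U := by
    intro T' hT' x hx
    rw [negPartAlgebra_eq] at hx ⊢
    refine map_mem_closure (f := fun b => T' * b) (continuous_mul_left T') hx ?_
    intro z hz
    have hz' : z ∈ Submodule.span ℂ (UNegSet U) := hz
    clear hz
    show T' * z ∈ Submodule.span ℂ (UNegSet U)
    induction hz' using Submodule.span_induction with
    | mem w hw => exact Submodule.subset_span (UNegSet_mul_left hU hT' hw)
    | zero => rw [mul_zero]; exact Submodule.zero_mem _
    | add u v _ _ hu hv => rw [mul_add]; exact Submodule.add_mem _ hu hv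
    | smul c u _ hu => rw [mul_smul_comm]; exact Submodule.smul_mem _ _ hu
  have hadj : ∀ y ∈ NonUnitalStarAlgebra.adjoin ℂ (UGenSet U),
      ∀ x ∈ negPartAlgebra U, x * y ∈ negPartAlgebra U ∧ y * x ∈ negPartAlgebra U := by
    intro y hy
    induction hy using NonUnitalStarAlgebra.adjoin_induction with
    | mem T' hT' => exact fun x hx => ⟨hN_r T' hT' x hx, hN_l T' hT' x hx⟩
    | add u v _ _ ihu ihv =>
        intro x hx
        refine ⟨?_, ?_⟩
        · rw [mul_add]
          exact cspan_add_mem ((ihu x hx).1) ((ihv x hx).1)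
        · rw [add_mul]
          exact cspan_add_mem ((ihu x hx).2) ((ihv x hx).2)
    | zero =>
        intro x hx
        exact ⟨by rw [mul_zero]; exact cspan_zero_mem _, by rw [zero_mul]; exact cspan_zero_mem _⟩
    | mul u v _ _ ihu ihv =>
        intro x hx
        refine ⟨?_, ?_⟩
        · rw [← mul_assoc]
          exact (ihv _ ((ihu x hx).1)).1
        · rw [mul_assoc]
          exact (ihu _ ((ihv x hx).2)).2
    | smul c u _ ihu =>
        intro x hx
        refine ⟨?_, ?_⟩
        · rw [mul_smul_comm]
          exact cspan_smul_mem c ((ihu x hx).1)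
        · rw [smul_mul_assoc]
          exact cspan_smul_mem c ((ihu x hx).2)
    | star u _ ihu =>
        intro x hx
        refine ⟨?_, ?_⟩
        · have h1 := negPart_star hU ((ihu _ (negPart_star hU hx)).2)
          rwa [star_mul, star_star] at h1
        · have h1 := negPart_star hU ((ihu _ (negPart_star hU hx)).1)
          rwa [star_mul, star_star] at h1
  intro y hy x hx
  rw [integratedAlgebra_eq] at hy
  constructor
  · have h1 := map_mem_closure (f := fun b => x * b) (continuous_mul_left x) hy
      (fun z hz => (hadj z hz x hx).1)
    rwa [negPart_isClosed.closure_eq] at h1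
  · have h1 := map_mem_closure (f := fun b => b * x) (continuous_mul_right x) hy
      (fun z hz => (hadj z hz x hx).2)
    rwa [negPart_isClosed.closure_eq] at h1

end AuxiliaryLemmas

/-- If `(A,U)` is a cross representation and `𝔏₋·A` is contained in the
closed span `C₋` of `A·𝔏₋`, then `C₋` is a closed two-sided ideal of the C*-algebra `C`
generated by `A·𝔏_U`, coincides with the C*-algebra generated by `A·𝔏₋`, and `𝔏₋·C ⊆ C₋`. -/
theorem negative_part_ideal
    (U : ℝ → H →L[ℂ] H) (hU : IsUnitaryOneParam U)
    (A : NonUnitalStarSubalgebra ℂ (H →L[ℂ] H))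
    (hAclosed : IsClosed (A : Set (H →L[ℂ] H)))
    (hAinv : ∀ t : ℝ, (fun a => U t * a * star (U t)) '' (A : Set (H →L[ℂ] H)) = A)
    (hcross : IsCrossRep (A : Set (H →L[ℂ] H)) (integratedAlgebra (volume : Measure ℝ) U))
    (C : Set (H →L[ℂ] H))
    (hC : C = closure (↑(NonUnitalStarAlgebra.adjoin ℂ
      {x : H →L[ℂ] H | ∃ a ∈ A, ∃ L ∈ integratedAlgebra (volume : Measure ℝ) U, x = a * L}) :
        Set (H →L[ℂ] H)))
    (Cm : Set (H →L[ℂ] H))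
    (hCm : Cm = closure (↑(Submodule.span ℂ
      {x : H →L[ℂ] H | ∃ a ∈ A, ∃ L ∈ negPartAlgebra U, x = a * L}) : Set (H →L[ℂ] H)))
    (hLmA : ∀ L ∈ negPartAlgebra U, ∀ a ∈ A, L * a ∈ Cm) :
    Cm ⊆ C ∧ IsClosed Cm ∧
    (∀ c ∈ C, ∀ x ∈ Cm, c * x ∈ Cm ∧ x * c ∈ Cm) ∧
    Cm = closure (↑(NonUnitalStarAlgebra.adjoin ℂ
      {x : H →L[ℂ] H | ∃ a ∈ A, ∃ L ∈ negPartAlgebra U, x = a * L}) : Set (H →L[ℂ] H)) ∧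
    (∀ L ∈ negPartAlgebra U, ∀ c ∈ C, L * c ∈ Cm) := by
    -- basic closure properties of Cm
  have hCmC : IsClosed Cm := by rw [hCm]; exact isClosed_closure
  have hCm_zero : (0 : H →L[ℂ] H) ∈ Cm := by rw [hCm]; exact cspan_zero_mem _
  have hCm_add : ∀ x ∈ Cm, ∀ y ∈ Cm, x + y ∈ Cm := by
    intro x hx y hy
    rw [hCm] at hx hy ⊢
    exact cspan_add_mem hx hy
  have hCm_smul : ∀ (c : ℂ), ∀ x ∈ Cm, c • x ∈ Cm := by
    intro c x hx
    rw [hCm] at hx ⊢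
    exact cspan_smul_mem c hx
  have hgen_sub : ∀ x ∈ {x : H →L[ℂ] H | ∃ a ∈ A, ∃ L ∈ negPartAlgebra U, x = a * L},
      x ∈ Cm := by
    intro x hx
    rw [hCm]
    exact subset_closure (Submodule.subset_span hx)
  -- A · Cm ⊆ Cm
  have hA_Cm : ∀ a ∈ A, ∀ x ∈ Cm, a * x ∈ Cm := by
    intro a ha x hx
    rw [hCm] at hx ⊢
    refine map_mem_closure (f := fun b => a * b) (continuous_mul_left a) hx ?_
    intro z hz
    have hz' : z ∈ Submodule.span ℂ
        {x : H →L[ℂ] H | ∃ a ∈ A, ∃ L ∈ negPartAlgebra U, x = a * L} := hz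
    clear hz
    show a * z ∈ Submodule.span ℂ
        {x : H →L[ℂ] H | ∃ a ∈ A, ∃ L ∈ negPartAlgebra U, x = a * L}
    induction hz' using Submodule.span_induction with
    | mem w hw =>
        obtain ⟨a', ha', L, hL, rfl⟩ := hw
        exact Submodule.subset_span ⟨a * a', mul_mem ha ha', L, hL, (mul_assoc a a' L).symm⟩
    | zero => rw [mul_zero]; exact Submodule.zero_mem _
    | add u v _ _ hu hv => rw [mul_add]; exact Submodule.add_mem _ hu hv
    | smul c u _ hu => rw [mul_smul_comm]; exact Submodule.smul_mem _ _ hu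
  -- Cm · A ⊆ Cm
  have hCm_A : ∀ x ∈ Cm, ∀ a ∈ A, x * a ∈ Cm := by
    intro x hx a ha
    have hmap : ∀ z ∈ (↑(Submodule.span ℂ
        {x : H →L[ℂ] H | ∃ a ∈ A, ∃ L ∈ negPartAlgebra U, x = a * L}) : Set (H →L[ℂ] H)),
        z * a ∈ Cm := by
      intro z hz
      have hz' : z ∈ Submodule.span ℂ
          {x : H →L[ℂ] H | ∃ a ∈ A, ∃ L ∈ negPartAlgebra U, x = a * L} := hz
      clear hz
      induction hz' using Submodule.span_induction with
      | mem w hw =>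
          obtain ⟨a', ha', L, hL, rfl⟩ := hw
          have h1 : L * a ∈ Cm := hLmA L hL a ha
          have h2 : a' * (L * a) ∈ Cm := hA_Cm a' ha' _ h1
          rwa [← mul_assoc] at h2
      | zero => rw [zero_mul]; exact hCm_zero
      | add u v _ _ hu hv => rw [add_mul]; exact hCm_add _ hu _ hv
      | smul c u _ hu => rw [smul_mul_assoc]; exact hCm_smul c _ hu
    rw [hCm] at hx
    have h3 := map_mem_closure (f := fun b => b * a) (continuous_mul_right a) hx hmap
    rwa [hCmC.closure_eq] at h3
  -- Cm · 𝔏_U ⊆ Cm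
  have hCm_I : ∀ x ∈ Cm, ∀ y ∈ integratedAlgebra (volume : Measure ℝ) U, x * y ∈ Cm := by
    intro x hx y hy
    have hmap : ∀ z ∈ (↑(Submodule.span ℂ
        {x : H →L[ℂ] H | ∃ a ∈ A, ∃ L ∈ negPartAlgebra U, x = a * L}) : Set (H →L[ℂ] H)),
        z * y ∈ Cm := by
      intro z hz
      have hz' : z ∈ Submodule.span ℂ
          {x : H →L[ℂ] H | ∃ a ∈ A, ∃ L ∈ negPartAlgebra U, x = a * L} := hz
      clear hz
      induction hz' using Submodule.span_induction with
      | mem w hw =>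
          obtain ⟨a', ha', L, hL, rfl⟩ := hw
          have h1 : L * y ∈ negPartAlgebra U := (negPart_mul hU y hy L hL).1
          have h2 : a' * (L * y) ∈ Cm := hgen_sub _ ⟨a', ha', L * y, h1, rfl⟩
          rwa [← mul_assoc] at h2
      | zero => rw [zero_mul]; exact hCm_zero
      | add u v _ _ hu hv => rw [add_mul]; exact hCm_add _ hu _ hv
      | smul c u _ hu => rw [smul_mul_assoc]; exact hCm_smul c _ hu
    rw [hCm] at hx
    have h3 := map_mem_closure (f := fun b => b * y) (continuous_mul_right y) hx hmap
    rwa [hCmC.closure_eq] at h3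
  -- star Cm ⊆ Cm
  have hCm_star : ∀ x ∈ Cm, star x ∈ Cm := by
    intro x hx
    have hmap : ∀ z ∈ (↑(Submodule.span ℂ
        {x : H →L[ℂ] H | ∃ a ∈ A, ∃ L ∈ negPartAlgebra U, x = a * L}) : Set (H →L[ℂ] H)),
        star z ∈ Cm := by
      intro z hz
      have hz' : z ∈ Submodule.span ℂ
          {x : H →L[ℂ] H | ∃ a ∈ A, ∃ L ∈ negPartAlgebra U, x = a * L} := hz
      clear hz
      induction hz' using Submodule.span_induction with
      | mem w hw =>
          obtain ⟨a', ha', L, hL, rfl⟩ := hw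
          rw [star_mul]
          exact hLmA _ (negPart_star hU hL) _ (star_mem ha')
      | zero => rw [star_zero]; exact hCm_zero
      | add u v _ _ hu hv => rw [star_add]; exact hCm_add _ hu _ hv
      | smul c u _ hu => rw [star_smul]; exact hCm_smul _ _ hu
    rw [hCm] at hx
    have h3 := map_mem_closure (f := fun b => star b) continuous_star hx hmap
    rwa [hCmC.closure_eq] at h3
  -- absorption of Cm by the adjoin generating C
  have habsorb : ∀ c ∈ NonUnitalStarAlgebra.adjoin ℂ
      {x : H →L[ℂ] H | ∃ a ∈ A, ∃ L ∈ integratedAlgebra (volume : Measure ℝ) U, x = a * L},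
      ∀ x ∈ Cm, c * x ∈ Cm ∧ x * c ∈ Cm := by
    intro c hc
    induction hc using NonUnitalStarAlgebra.adjoin_induction with
    | mem g hg =>
        intro x hx
        obtain ⟨a, ha, L, hL, rfl⟩ := hg
        constructor
        · have h1 : star x ∈ Cm := hCm_star x hx
          have h2 : star x * star L ∈ Cm := hCm_I _ h1 _ (integrated_star hU hL)
          have h3 : (star x * star L) * star a ∈ Cm := hCm_A _ h2 _ (star_mem ha)
          have h4 := hCm_star _ h3
          rw [star_mul, star_mul, star_star, star_star, star_star] at h4
          rwa [← mul_assoc] at h4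
        · have h1 := hCm_I _ (hCm_A _ hx _ ha) _ hL
          rwa [mul_assoc] at h1
    | add u v _ _ ihu ihv =>
        intro x hx
        refine ⟨?_, ?_⟩
        · rw [add_mul]; exact hCm_add _ ((ihu x hx).1) _ ((ihv x hx).1)
        · rw [mul_add]; exact hCm_add _ ((ihu x hx).2) _ ((ihv x hx).2)
    | zero =>
        intro x hx
        exact ⟨by rw [zero_mul]; exact hCm_zero, by rw [mul_zero]; exact hCm_zero⟩
    | mul u v _ _ ihu ihv =>
        intro x hx
        refine ⟨?_, ?_⟩
        · rw [mul_assoc]; exact (ihu _ ((ihv x hx).1)).1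
        · rw [← mul_assoc]; exact (ihv _ ((ihu x hx).2)).2
    | smul c u _ ihu =>
        intro x hx
        refine ⟨?_, ?_⟩
        · rw [smul_mul_assoc]; exact hCm_smul _ _ ((ihu x hx).1)
        · rw [mul_smul_comm]; exact hCm_smul _ _ ((ihu x hx).2)
    | star u _ ihu =>
        intro x hx
        refine ⟨?_, ?_⟩
        · have h1 := hCm_star _ ((ihu _ (hCm_star x hx)).2)
          rwa [star_mul, star_star] at h1
        · have h1 := hCm_star _ ((ihu _ (hCm_star x hx)).1)
          rwa [star_mul, star_star] at h1
  have habsorbC : ∀ c ∈ C, ∀ x ∈ Cm, c * x ∈ Cm ∧ x * c ∈ Cm := by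
    intro c hc x hx
    rw [hC] at hc
    constructor
    · have h1 := map_mem_closure (f := fun b => b * x) (continuous_mul_right x) hc
        (fun z hz => (habsorb z hz x hx).1)
      rwa [hCmC.closure_eq] at h1
    · have h1 := map_mem_closure (f := fun b => x * b) (continuous_mul_left x) hc
        (fun z hz => (habsorb z hz x hx).2)
      rwa [hCmC.closure_eq] at h1
  -- Cm ⊆ C
  have hCmsubC : Cm ⊆ C := by
    rw [hCm, hC]
    apply closure_mono
    intro x hx
    have hx' : x ∈ Submodule.span ℂ
        {x : H →L[ℂ] H | ∃ a ∈ A, ∃ L ∈ negPartAlgebra U, x = a * L} := hx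
    clear hx
    show x ∈ NonUnitalStarAlgebra.adjoin ℂ
        {x : H →L[ℂ] H | ∃ a ∈ A, ∃ L ∈ integratedAlgebra (volume : Measure ℝ) U, x = a * L}
    induction hx' using Submodule.span_induction with
    | mem w hw =>
        obtain ⟨a, ha, L, hL, rfl⟩ := hw
        exact NonUnitalStarAlgebra.subset_adjoin ℂ _ ⟨a, ha, L, negPart_subset hL, rfl⟩
    | zero => exact zero_mem _
    | add u v _ _ hu hv => exact add_mem hu hv
    | smul c u _ hu => exact SMulMemClass.smul_mem c hu
  -- Cm equals the C*-algebra generated by A·𝔏₋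
  have hgoal4 : Cm = closure (↑(NonUnitalStarAlgebra.adjoin ℂ
      {x : H →L[ℂ] H | ∃ a ∈ A, ∃ L ∈ negPartAlgebra U, x = a * L}) : Set (H →L[ℂ] H)) := by
    apply Set.Subset.antisymm
    · rw [hCm]
      apply closure_mono
      intro x hx
      have hx' : x ∈ Submodule.span ℂ
          {x : H →L[ℂ] H | ∃ a ∈ A, ∃ L ∈ negPartAlgebra U, x = a * L} := hx
      clear hx
      show x ∈ NonUnitalStarAlgebra.adjoin ℂ
          {x : H →L[ℂ] H | ∃ a ∈ A, ∃ L ∈ negPartAlgebra U, x = a * L}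
      induction hx' using Submodule.span_induction with
      | mem w hw => exact NonUnitalStarAlgebra.subset_adjoin ℂ _ hw
      | zero => exact zero_mem _
      | add u v _ _ hu hv => exact add_mem hu hv
      | smul c u _ hu => exact SMulMemClass.smul_mem c hu
    · refine closure_minimal ?_ hCmC
      intro c hc
      have hc' : c ∈ NonUnitalStarAlgebra.adjoin ℂ
          {x : H →L[ℂ] H | ∃ a ∈ A, ∃ L ∈ negPartAlgebra U, x = a * L} := hc
      clear hc
      induction hc' using NonUnitalStarAlgebra.adjoin_induction with
      | mem g hg => exact hgen_sub g hg
      | add u v _ _ ihu ihv => exact hCm_add _ ihu _ ihv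
      | zero => exact hCm_zero
      | mul u v _ hv' ihu ihv => exact (habsorbC v (hCmsubC ihv) u ihu).2
      | smul c u _ ihu => exact hCm_smul c _ ihu
      | star u _ ihu => exact hCm_star _ ihu
  -- 𝔏₋ · C ⊆ Cm
  have hgoal5adj : ∀ c ∈ NonUnitalStarAlgebra.adjoin ℂ
      {x : H →L[ℂ] H | ∃ a ∈ A, ∃ L ∈ integratedAlgebra (volume : Measure ℝ) U, x = a * L},
      ∀ L ∈ negPartAlgebra U, L * c ∈ Cm ∧ L * star c ∈ Cm := by
    intro c hc
    induction hc using NonUnitalStarAlgebra.adjoin_induction with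
    | mem g hg =>
        intro L hL
        obtain ⟨a, ha, L', hL', rfl⟩ := hg
        constructor
        · have h1 := hCm_I _ (hLmA L hL a ha) _ hL'
          rwa [mul_assoc] at h1
        · have h1 : L * star L' ∈ negPartAlgebra U :=
            (negPart_mul hU _ (integrated_star hU hL') _ hL).1
          have h2 := hLmA _ h1 _ (star_mem ha)
          rw [star_mul, ← mul_assoc]
          exact h2
    | add u v _ _ ihu ihv =>
        intro L hL
        refine ⟨?_, ?_⟩
        · rw [mul_add]; exact hCm_add _ ((ihu L hL).1) _ ((ihv L hL).1)
        · rw [star_add, mul_add]; exact hCm_add _ ((ihu L hL).2) _ ((ihv L hL).2)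
    | zero =>
        intro L hL
        exact ⟨by rw [mul_zero]; exact hCm_zero,
          by rw [star_zero, mul_zero]; exact hCm_zero⟩
    | mul u v hu' hv' ihu ihv =>
        intro L hL
        refine ⟨?_, ?_⟩
        · have hvC : v ∈ C := by
            rw [hC]; exact subset_closure hv'
          have h1 := (habsorbC v hvC _ ((ihu L hL).1)).2
          rwa [mul_assoc] at h1
        · have huC : star u ∈ C := by
            rw [hC]; exact subset_closure (star_mem hu')
          have h1 := (habsorbC _ huC _ ((ihv L hL).2)).2
          rw [star_mul, ← mul_assoc]
          exact h1
    | smul c u _ ihu =>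
        intro L hL
        refine ⟨?_, ?_⟩
        · rw [mul_smul_comm]; exact hCm_smul _ _ ((ihu L hL).1)
        · rw [star_smul, mul_smul_comm]; exact hCm_smul _ _ ((ihu L hL).2)
    | star u _ ihu =>
        intro L hL
        exact ⟨(ihu L hL).2, by rw [star_star]; exact (ihu L hL).1⟩
  have hgoal5 : ∀ L ∈ negPartAlgebra U, ∀ c ∈ C, L * c ∈ Cm := by
    intro L hL c hc
    rw [hC] at hc
    have h1 := map_mem_closure (f := fun b => L * b) (continuous_mul_left L) hc
      (fun z hz => (hgoal5adj z hz L hL).1)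
    rwa [hCmC.closure_eq] at h1
  exact ⟨hCmsubC, hCmC, habsorbC, hgoal4, hgoal5⟩
end
end

section
/- Let G be a locally compact group (in the paper stated for finite-dimensional Lie groups; only local compactness is used), (U,𝓗) a strongly continuous unitary representation of G on a complex Hilbert space, 𝔏 := 𝔏_U, and M := {A ∈ B(𝓗) : A·𝔏 ⊆ 𝔏 and 𝔏·A ⊆ 𝔏} the relative multiplier algebra of 𝔏 in B(𝓗). Then every A ∈ M for which the map G → B(𝓗), g ↦ U_g A, is norm-continuous is contained in 𝔏. -/
open MeasureTheory Filter

noncomputable section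

variable {H : Type*} [NormedAddCommGroup H] [InnerProductSpace ℂ H] [CompleteSpace H]

/-- Every relative multiplier `A` of `𝔏 = 𝔏_U` (i.e. `A·𝔏 ⊆ 𝔏` and
`𝔏·A ⊆ 𝔏`) for which `g ↦ U_g A` is norm-continuous belongs to `𝔏`. -/
theorem relative_multiplier_mem_of_norm_continuous
    {G : Type*} [Group G] [TopologicalSpace G] [IsTopologicalGroup G]
    [LocallyCompactSpace G] [MeasurableSpace G] [BorelSpace G]
    (μ : Measure G) [μ.IsHaarMeasure]
    (U : G → H →L[ℂ] H) (hU : IsUnitaryRep U)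
    (A : H →L[ℂ] H)
    (hmult : ∀ L ∈ integratedAlgebra μ U,
      A * L ∈ integratedAlgebra μ U ∧ L * A ∈ integratedAlgebra μ U)
    (hcont : Continuous fun g : G => U g * A) :
    A ∈ integratedAlgebra μ U := by
  obtain ⟨hUu, hUm, hUc⟩ := hU
  have hU1 : U 1 = 1 := by
    have h := hUm 1 1
    rw [mul_one] at h
    have h1 : star (U 1) * U 1 = 1 := Unitary.star_mul_self_of_mem (hUu 1)
    calc U 1 = star (U 1) * U 1 * U 1 := by rw [h1, one_mul]
    _ = star (U 1) * (U 1 * U 1) := mul_assoc _ _ _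
    _ = star (U 1) * U 1 := by rw [← h]
    _ = 1 := h1
  have hclosed : IsClosed (integratedAlgebra μ U) := isClosed_closure
  rw [← hclosed.closure_eq, Metric.mem_closure_iff]
  intro ε hε
  -- the neighborhood where `‖U g * A - A‖ < ε/2`
  set V : Set G := (fun g => U g * A) ⁻¹' Metric.ball A (ε / 2) with hVdef
  have hVopen : IsOpen V := Metric.isOpen_ball.preimage hcont
  have hV1 : (1 : G) ∈ V := by
    simp [hVdef, hU1, Metric.mem_ball, half_pos hε]
  -- a bump function supported in `V`
  obtain ⟨f, hf1, hf0, hfcs, hf01⟩ := exists_continuous_one_zero_of_isCompact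
    (isCompact_singleton (x := (1 : G))) hVopen.isClosed_compl
    (Set.disjoint_singleton_left.mpr (by simpa using hV1))
  have hfnn : ∀ g, 0 ≤ f g := fun g => (hf01 g).1
  have hsuppV : Function.support f ⊆ V := by
    intro g hg
    by_contra hgV
    exact hg (hf0 hgV)
  have hfint : Integrable (fun g => f g) μ :=
    f.continuous.integrable_of_hasCompactSupport hfcs
  set I : ℝ := ∫ g, f g ∂μ with hIdef
  have hIpos : 0 < I := by
    rw [hIdef, integral_pos_iff_support_of_nonneg_ae (Eventually.of_forall hfnn) hfint]
    have hopen : IsOpen (Function.support f) := f.continuous.isOpen_support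
    have h1s : (1 : G) ∈ Function.support f := by
      simp [Function.mem_support, hf1 rfl]
    exact hopen.measure_pos μ ⟨1, h1s⟩
  -- the normalized bump
  set φ : G → ℝ := fun g => I⁻¹ * f g with hφdef
  have hφnn : ∀ g, 0 ≤ φ g := fun g => mul_nonneg (inv_nonneg.mpr hIpos.le) (hfnn g)
  have hφint : Integrable φ μ := hfint.const_mul _
  have hφone : ∫ g, φ g ∂μ = 1 := by
    rw [hφdef]
    simp only []
    rw [integral_const_mul]
    exact inv_mul_cancel₀ hIpos.ne'
  have hφsupp : ∀ g, φ g ≠ 0 → g ∈ V := by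
    intro g hg
    apply hsuppV
    intro hfg
    exact hg (by simp [hφdef, hfg])
  have hφcs : HasCompactSupport φ := hfcs.mul_left
  have hφcont : Continuous φ := continuous_const.mul f.continuous
  set fc : G → ℂ := fun g => ((φ g : ℝ) : ℂ) with hfcdef
  have hfcint : Integrable fc μ := hφint.ofReal
  have hfcone : ∫ g, fc g ∂μ = 1 := by
    rw [hfcdef]
    simp only []
    have h := _root_.integral_ofReal (𝕜 := ℂ) (f := φ) (μ := μ)
    rw [hφone] at h
    simpa using h
  have hfcnorm : ∀ g, ‖fc g‖ = φ g := fun g => by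
    simp [hfcdef, abs_of_nonneg (hφnn g)]
  -- integrability of the vector-valued integrands
  have hInt : ∀ ψ : H, Integrable (fun g => fc g • U g ψ) μ := by
    intro ψ
    apply Continuous.integrable_of_hasCompactSupport
    · exact (Complex.continuous_ofReal.comp hφcont).smul (hUc ψ)
    · apply HasCompactSupport.intro' (hφcs.isCompact) (isClosed_tsupport φ)
      intro g hg
      have : φ g = 0 := image_eq_zero_of_notMem_tsupport hg
      simp [hfcdef, this]
  -- the integrated operator `T = U(φ)`
  set Tl : H →ₗ[ℂ] H :=
    { toFun := fun ψ => ∫ g, fc g • U g ψ ∂μ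
      map_add' := fun ψ χ => by
        simp_rw [map_add, smul_add]
        exact integral_add (hInt ψ) (hInt χ)
      map_smul' := fun c ψ => by
        simp_rw [_root_.map_smul, RingHom.id_apply, smul_comm (fc _) c]
        exact integral_smul c _ } with hTldef
  have hTlbound : ∀ ψ : H, ‖Tl ψ‖ ≤ 1 * ‖ψ‖ := by
    intro ψ
    have : ‖∫ g, fc g • U g ψ ∂μ‖ ≤ ∫ g, φ g * ‖ψ‖ ∂μ := by
      apply norm_integral_le_of_norm_le (hφint.mul_const _)
      filter_upwards with g
      rw [norm_smul, hfcnorm, ContinuousLinearMap.norm_map_of_mem_unitary (hUu g)]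
    simpa [integral_mul_const, hφone, hTldef] using this
  set T : H →L[ℂ] H := Tl.mkContinuous 1 hTlbound with hTdef
  have hTmem : T ∈ integratedAlgebra μ U := by
    apply subset_closure
    exact NonUnitalStarAlgebra.subset_adjoin ℂ _ ⟨fc, hfcint, fun ψ => rfl⟩
  refine ⟨T * A, (hmult T hTmem).2, ?_⟩
  -- the estimate `‖T * A - A‖ ≤ ε / 2`
  have hkey : ∀ ψ : H, ‖(T * A - A) ψ‖ ≤ ε / 2 * ‖ψ‖ := by
    intro ψ
    have hAψ : A ψ = ∫ g, fc g • A ψ ∂μ := by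
      rw [integral_smul_const, hfcone, one_smul]
    have hTAψ : (T * A - A) ψ = ∫ g, fc g • ((U g * A) ψ - A ψ) ∂μ := by
      have : (T * A - A) ψ = (∫ g, fc g • U g (A ψ) ∂μ) - ∫ g, fc g • A ψ ∂μ := by
        rw [← hAψ]; rfl
      rw [this, ← integral_sub (hInt (A ψ)) (hfcint.smul_const (A ψ))]
      simp_rw [← smul_sub]
      rfl
    rw [hTAψ]
    have hbd : ‖∫ g, fc g • ((U g * A) ψ - A ψ) ∂μ‖ ≤ ∫ g, φ g * (ε / 2 * ‖ψ‖) ∂μ := by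
      apply norm_integral_le_of_norm_le (hφint.mul_const _)
      filter_upwards with g
      rw [norm_smul, hfcnorm]
      rcases eq_or_ne (φ g) 0 with h0 | h0
      · rw [h0]
        simp
      · have hgV : g ∈ V := hφsupp g h0
        have hlt : ‖U g * A - A‖ < ε / 2 := by
          have := hgV
          rwa [hVdef, Set.mem_preimage, Metric.mem_ball, dist_eq_norm] at this
        have : ‖(U g * A) ψ - A ψ‖ ≤ ε / 2 * ‖ψ‖ := by
          have h1 : ‖(U g * A - A) ψ‖ ≤ ‖U g * A - A‖ * ‖ψ‖ :=
            (U g * A - A).le_opNorm ψ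
          have h2 : (U g * A - A) ψ = (U g * A) ψ - A ψ := rfl
          rw [h2] at h1
          exact h1.trans (mul_le_mul_of_nonneg_right hlt.le (norm_nonneg ψ))
        exact mul_le_mul_of_nonneg_left this (hφnn g)
    calc ‖∫ g, fc g • ((U g * A) ψ - A ψ) ∂μ‖ ≤ ∫ g, φ g * (ε / 2 * ‖ψ‖) ∂μ := hbd
    _ = ε / 2 * ‖ψ‖ := by rw [integral_mul_const, hφone, one_mul]
  have hnorm : ‖T * A - A‖ ≤ ε / 2 :=
    ContinuousLinearMap.opNorm_le_bound _ (by positivity) hkey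
  rw [dist_eq_norm, ← norm_neg]
  calc ‖-(A - (T * A))‖ = ‖T * A - A‖ := by rw [neg_sub]
  _ ≤ ε / 2 := hnorm
  _ < ε := half_lt_self hε
end
end

section
/- On L²(ℝ) (with Lebesgue measure), let τ_t denote the translation unitary (τ_t ψ)(x) = ψ(x+t), let M denote the unitary multiplication operator by the function x ↦ e^{ix³}, and let Π denote the orthogonal projection onto the closed subspace {ψ ∈ L²(ℝ) : 𝓕ψ vanishes almost everywhere outside [1,2]}, where 𝓕 is the Fourier–Plancherel transform (the unitary extension to L²(ℝ) of f ↦ (ξ ↦ ∫ f(x) e^{−iξx} dx), up to normalization). Then the function t ↦ ‖τ_t M Π − M Π‖ (operator norm) does not tend to 0 as t → 0. (This shows that the natural covariant representation of the translation action on C_b(ℝ) on L²(ℝ) is not a cross representation with respect to the host C*(ℝ).) -/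
open MeasureTheory Filter

noncomputable section

namespace CrossAux

open Complex SchwartzMap

/-- A smooth compactly supported function as a Schwartz map. -/
def ofCS (f : ℝ → ℂ) (hf : ContDiff ℝ (⊤:ℕ∞) f) (h : HasCompactSupport f) : SchwartzMap ℝ ℂ where
  toFun := f
  smooth' := hf
  decay' := by
    intro k n
    have h1 : Continuous fun x : ℝ => ‖x‖ ^ k * ‖iteratedFDeriv ℝ n f x‖ :=
      (continuous_id.norm.pow k).mul
        (hf.continuous_iteratedFDeriv (by exact_mod_cast le_top)).norm
    have h2 : HasCompactSupport fun x : ℝ => ‖x‖ ^ k * ‖iteratedFDeriv ℝ n f x‖ :=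
      ((h.iteratedFDeriv n).norm).mul_left
    obtain ⟨C, hC⟩ := h1.bounded_above_of_compact_support h2
    exact ⟨C, fun x => by have := hC x; rwa [Real.norm_eq_abs, _root_.abs_of_nonneg (by positivity)] at this⟩

@[simp] lemma ofCS_apply (f : ℝ → ℂ) (hf : ContDiff ℝ (⊤:ℕ∞) f) (h : HasCompactSupport f) (x : ℝ) :
    ofCS f hf h x = f x := rfl

/-- The bump function centered at `3/(4π)` with outer radius `1/(4π)`. -/
def bump : ContDiffBump ((3 : ℝ) / (4 * Real.pi)) :=
  ⟨1 / (8 * Real.pi), 1 / (4 * Real.pi), by positivity, by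
    have := Real.pi_pos
    rw [div_lt_div_iff₀ (by positivity) (by positivity)]
    nlinarith⟩

lemma bump_contDiff : ContDiff ℝ (⊤:ℕ∞) (fun x : ℝ => ((bump x : ℝ) : ℂ)) :=
  Complex.ofRealCLM.contDiff.comp (f := ⇑bump) bump.contDiff

lemma bump_hcs : HasCompactSupport (fun x : ℝ => ((bump x : ℝ) : ℂ)) :=
  (bump.hasCompactSupport).comp_left (g := fun r : ℝ => (r : ℂ)) (by simp)

def gS : SchwartzMap ℝ ℂ := ofCS _ bump_contDiff bump_hcs

/-- Our fixed Schwartz function with Fourier transform supported in the band. -/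
def ψS : SchwartzMap ℝ ℂ := (fourierTransformCLE ℂ (SchwartzMap ℝ ℂ)).symm gS

lemma fourier_ψS : FourierTransform.fourier (⇑ψS) = ⇑gS := by
  have : fourierTransformCLE ℂ (SchwartzMap ℝ ℂ) ψS = gS := (fourierTransformCLE ℂ (SchwartzMap ℝ ℂ)).apply_symm_apply gS
  rw [← this]
  rfl

/-- The key integral identity. -/
lemma key (ξ : ℝ) :
    ∫ x : ℝ, ψS x * Complex.exp (-(Complex.I * (ξ : ℂ) * (x : ℂ)))
      = ((bump (ξ / (2 * Real.pi)) : ℝ) : ℂ) := by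
  have hπ : (Real.pi : ℝ) ≠ 0 := Real.pi_ne_zero
  have h1 : FourierTransform.fourier (⇑ψS) (ξ / (2 * Real.pi))
      = ((bump (ξ / (2 * Real.pi)) : ℝ) : ℂ) := by
    rw [fourier_ψS]; rfl
  rw [← h1, Real.fourier_real_eq_integral_exp_smul]
  refine integral_congr_ae (Eventually.of_forall fun x => ?_)
  simp only [smul_eq_mul]
  rw [mul_comm]
  congr 1
  have h2 : -2 * Real.pi * x * (ξ / (2 * Real.pi)) = -(ξ * x) := by
    field_simp
  rw [h2]
  push_cast
  ring


lemma bump_outside {ξ : ℝ} (hξ : ξ ∉ Set.Icc (1 : ℝ) 2) : (bump (ξ / (2 * Real.pi)) : ℝ) = 0 := by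
  have hπ := Real.pi_pos
  apply bump.zero_of_le_dist
  rw [Real.dist_eq]
  have he : ξ / (2 * Real.pi) - 3 / (4 * Real.pi) = (2 * ξ - 3) / (4 * Real.pi) := by
    field_simp; ring
  show 1 / (4 * Real.pi) ≤ |ξ / (2 * Real.pi) - 3 / (4 * Real.pi)|
  rw [he, abs_div, abs_of_pos (by positivity : (0:ℝ) < 4 * Real.pi)]
  rw [Set.mem_Icc, not_and_or] at hξ
  gcongr
  rcases hξ with h | h
  · push_neg at h
    exact le_abs.mpr (Or.inr (by linarith))
  · push_neg at h
    exact le_abs.mpr (Or.inl (by linarith))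

lemma bump_center : (bump ((3:ℝ)/2 / (2 * Real.pi)) : ℝ) = 1 := by
  have h : (3:ℝ)/2 / (2 * Real.pi) = 3 / (4 * Real.pi) := by ring
  rw [h]
  exact bump.one_of_mem_closedBall (Metric.mem_closedBall_self bump.rIn_pos.le)

/-- bound for ψS -/
lemma exists_bound : ∃ C : ℝ, ∀ x : ℝ, ‖ψS x‖ ≤ C := by
  obtain ⟨C, hC⟩ := ψS.decay 0 0
  exact ⟨C, fun x => by simpa using hC.2 x⟩

lemma integrable_sq_shift (a : ℝ) :
    Integrable (fun x : ℝ => ‖ψS (x - a)‖ ^ 2) (volume : Measure ℝ) := by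
  have h0 : Integrable (fun x : ℝ => ‖ψS x‖ ^ 2) (volume : Measure ℝ) := by
    obtain ⟨C, hC⟩ := exists_bound
    have := (ψS.integrable (μ := (volume : Measure ℝ))).norm.bdd_mul
      (c := C) (f := fun x => ‖ψS x‖)
      (ψS.continuous.norm.aestronglyMeasurable)
      (Eventually.of_forall fun x => by
        simpa [Real.norm_eq_abs, _root_.abs_of_nonneg (norm_nonneg _)] using hC x)
    simpa [pow_two] using this
  exact h0.comp_sub_right a

lemma memLp_shift (a : ℝ) :
    MemLp (fun x : ℝ => ψS (x - a)) 2 (volume : Measure ℝ) := by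
  refine (memLp_two_iff_integrable_sq_norm ?_).mpr ?_
  · exact (ψS.continuous.comp (continuous_id.sub continuous_const)).aestronglyMeasurable
  · exact integrable_sq_shift a

/-- the squared L² mass of ψS -/
def N : ℝ := ∫ x : ℝ, ‖ψS x‖ ^ 2

lemma N_pos : 0 < N := by
  rcases (integral_nonneg (f := fun x : ℝ => ‖ψS x‖ ^ 2) (fun x => sq_nonneg ‖ψS x‖)).lt_or_eq with h | h
  · exact h
  · exfalso
    have h0 : (fun x : ℝ => ‖ψS x‖ ^ 2) =ᵐ[(volume : Measure ℝ)] 0 :=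
      (integral_eq_zero_iff_of_nonneg (fun x => sq_nonneg ‖ψS x‖)
        (by simpa using integrable_sq_shift 0)).mp h.symm
    have h1 : (fun x : ℝ => ‖ψS x‖ ^ 2) = 0 :=
      (Continuous.ae_eq_iff_eq (volume : Measure ℝ)
        (ψS.continuous.norm.pow 2) continuous_zero).mp h0
    have h2 : ∀ x : ℝ, ψS x = 0 := by
      intro x
      have := congrFun h1 x
      simpa using this
    have h3 := key (3/2)
    rw [bump_center] at h3
    simp only [h2, zero_mul, integral_zero] at h3
    exact one_ne_zero h3.symm


lemma norm_exp_I_cube (s : ℝ) : ‖Complex.exp (Complex.I * (s : ℂ) ^ 3)‖ = 1 := by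
  rw [show Complex.I * (s : ℂ) ^ 3 = ((s ^ 3 : ℝ) : ℂ) * Complex.I by push_cast; ring,
    Complex.norm_exp_ofReal_mul_I]

lemma norm_sq_eq (w : Lp ℂ 2 (volume : Measure ℝ)) {f : ℝ → ℂ}
    (hw : ⇑w =ᵐ[(volume : Measure ℝ)] f) :
    ‖w‖ ^ 2 = ∫ x : ℝ, ‖f x‖ ^ 2 := by
  have h1 : (inner ℂ w w : ℂ) = ((∫ x : ℝ, ‖f x‖ ^ 2 : ℝ) : ℂ) := by
    rw [L2.inner_def]
    have hcast : ((∫ x : ℝ, ‖f x‖ ^ 2 : ℝ) : ℂ) = ∫ x : ℝ, ((‖f x‖ ^ 2 : ℝ) : ℂ) :=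
      (integral_ofReal (𝕜 := ℂ)).symm
    rw [hcast]
    refine integral_congr_ae (hw.mono fun x hx => ?_)
    simp only []
    rw [inner_self_eq_norm_sq_to_K, hx]
    push_cast
    rfl
  have h2 := inner_self_eq_norm_sq (𝕜 := ℂ) w
  rw [h1] at h2
  simpa using h2.symm


/-- The fixed auxiliary integrand for Riemann-Lebesgue. -/
def hfun (t : ℝ) : ℝ → ℂ := fun y =>
  (Complex.exp (((-(3*t*y^2 + 3*t^2*y) : ℝ) : ℂ) * Complex.I) *
    (starRingEnd ℂ) (ψS (y + t))) * ψS y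

lemma hfun_integrable (t : ℝ) : Integrable (hfun t) (volume : Measure ℝ) := by
  obtain ⟨C, hC⟩ := exists_bound
  have hcont : Continuous fun y : ℝ =>
      Complex.exp (((-(3*t*y^2 + 3*t^2*y) : ℝ) : ℂ) * Complex.I) *
        (starRingEnd ℂ) (ψS (y + t)) := by
    apply Continuous.mul
    · exact Complex.continuous_exp.comp (Continuous.mul (by continuity) continuous_const)
    · exact continuous_star.comp (ψS.continuous.comp (by continuity))
  exact (ψS.integrable (μ := (volume : Measure ℝ))).bdd_mul (c := C)
    hcont.aestronglyMeasurable
    (Eventually.of_forall fun y => by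
      rw [norm_mul, Complex.norm_exp_ofReal_mul_I, one_mul, RCLike.norm_conj]
      exact hC _)

lemma hfun_RL {t : ℝ} (ht : 0 < t) :
    Tendsto (fun a : ℝ => FourierTransform.fourier (hfun t) (3*t*a/Real.pi)) atTop (nhds 0) := by
  apply (Real.zero_at_infty_fourier (hfun t)).comp
  have h1 : Tendsto (fun a : ℝ => 3*t*a/Real.pi) atTop atTop :=
    Tendsto.atTop_div_const Real.pi_pos
      (Filter.tendsto_id.const_mul_atTop (by positivity : (0:ℝ) < 3*t))
  exact h1.mono_right (by rw [cocompact_eq_atBot_atTop]; exact le_sup_right)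

lemma pointwise (t a x : ℝ) :
    (starRingEnd ℂ) (Complex.exp (Complex.I * (((x + t : ℝ)) : ℂ)^3) * ψS (x + t - a)) *
      (Complex.exp (Complex.I * ((x : ℝ) : ℂ)^3) * ψS (x - a))
    = Complex.exp (((-(3*t*a^2 + 3*t^2*a + t^3) : ℝ) : ℂ) * Complex.I) *
        (Complex.exp (((-2 * Real.pi * (x - a) * (3*t*a/Real.pi) : ℝ) : ℂ) * Complex.I) *
          hfun t (x - a)) := by
  have hπ : Real.pi ≠ 0 := Real.pi_ne_zero
  have hre : (-2 * Real.pi * (x - a) * (3*t*a/Real.pi) : ℝ) = -(6*t*a*(x-a)) := by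
    field_simp
    ring
  rw [hre]
  simp only [hfun]
  rw [map_mul, ← Complex.exp_conj]
  simp only [map_mul, map_pow, Complex.conj_I, Complex.conj_ofReal]
  rw [show (x:ℝ) + t - a = x - a + t from by ring]
  rw [mul_mul_mul_comm, ← Complex.exp_add]
  rw [show Complex.exp (((-(3*t*a^2 + 3*t^2*a + t^3) : ℝ) : ℂ) * Complex.I) *
      (Complex.exp (((-(6*t*a*(x-a)) : ℝ) : ℂ) * Complex.I) *
        ((Complex.exp (((-(3*t*(x-a)^2 + 3*t^2*(x-a)) : ℝ) : ℂ) * Complex.I) *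
          (starRingEnd ℂ) (ψS (x - a + t))) * ψS (x - a)))
      = (Complex.exp (((-(3*t*a^2 + 3*t^2*a + t^3) : ℝ) : ℂ) * Complex.I) *
          Complex.exp (((-(6*t*a*(x-a)) : ℝ) : ℂ) * Complex.I) *
          Complex.exp (((-(3*t*(x-a)^2 + 3*t^2*(x-a)) : ℝ) : ℂ) * Complex.I)) *
          ((starRingEnd ℂ) (ψS (x - a + t)) * ψS (x - a)) from by ring]
  rw [← Complex.exp_add, ← Complex.exp_add]
  congr 1
  push_cast
  ring

lemma inner_formula {t a : ℝ} (u v : Lp ℂ 2 (volume : Measure ℝ))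
    (hu : ⇑u =ᵐ[(volume : Measure ℝ)]
      fun x : ℝ => Complex.exp (Complex.I * (((x + t : ℝ)) : ℂ)^3) * ψS (x + t - a))
    (hv : ⇑v =ᵐ[(volume : Measure ℝ)]
      fun x : ℝ => Complex.exp (Complex.I * ((x : ℝ) : ℂ)^3) * ψS (x - a)) :
    ‖(inner ℂ u v : ℂ)‖ = ‖FourierTransform.fourier (hfun t) (3*t*a/Real.pi)‖ := by
  have h1 : (inner ℂ u v : ℂ) = ∫ x : ℝ,
      (starRingEnd ℂ) (Complex.exp (Complex.I * (((x + t : ℝ)) : ℂ)^3) * ψS (x + t - a)) *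
        (Complex.exp (Complex.I * ((x : ℝ) : ℂ)^3) * ψS (x - a)) := by
    rw [L2.inner_def]
    refine integral_congr_ae ?_
    filter_upwards [hu, hv] with x h1 h2
    rw [RCLike.inner_apply, h1, h2]
    ring
  have h2 : (inner ℂ u v : ℂ)
      = Complex.exp (((-(3*t*a^2 + 3*t^2*a + t^3) : ℝ) : ℂ) * Complex.I) *
          FourierTransform.fourier (hfun t) (3*t*a/Real.pi) := by
    rw [h1]
    have e1 : (fun x : ℝ =>
        (starRingEnd ℂ) (Complex.exp (Complex.I * (((x + t : ℝ)) : ℂ)^3) * ψS (x + t - a)) *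
          (Complex.exp (Complex.I * ((x : ℝ) : ℂ)^3) * ψS (x - a)))
        = fun x : ℝ => (fun y : ℝ =>
          Complex.exp (((-(3*t*a^2 + 3*t^2*a + t^3) : ℝ) : ℂ) * Complex.I) *
            (Complex.exp (((-2 * Real.pi * y * (3*t*a/Real.pi) : ℝ) : ℂ) * Complex.I) *
              hfun t y)) (x - a) := by
      funext x
      exact pointwise t a x
    rw [e1]
    rw [integral_sub_right_eq_self (fun y : ℝ =>
      Complex.exp (((-(3*t*a^2 + 3*t^2*a + t^3) : ℝ) : ℂ) * Complex.I) *
        (Complex.exp (((-2 * Real.pi * y * (3*t*a/Real.pi) : ℝ) : ℂ) * Complex.I) *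
          hfun t y)) a]
    rw [integral_const_mul]
    congr 1
    rw [Real.fourier_real_eq_integral_exp_smul]
    simp only [smul_eq_mul]
  rw [h2, norm_mul, Complex.norm_exp_ofReal_mul_I, one_mul]

/-- If `w` is a.e. a unimodular multiple of a translate of `ψS`, its norm² is `N`. -/
lemma norm_sq_eq_N (w : Lp ℂ 2 (volume : Measure ℝ)) (e : ℝ → ℂ) (he : ∀ x, ‖e x‖ = 1)
    (b : ℝ) (hw : ⇑w =ᵐ[(volume : Measure ℝ)] fun x : ℝ => e x * ψS (x - b)) :
    ‖w‖ ^ 2 = N := by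
  rw [norm_sq_eq w hw]
  have : ∀ x : ℝ, ‖e x * ψS (x - b)‖ ^ 2 = ‖ψS (x - b)‖ ^ 2 := fun x => by
    rw [norm_mul, he, one_mul]
  simp_rw [this]
  exact integral_sub_right_eq_self (fun y : ℝ => ‖ψS y‖ ^ 2) b

end CrossAux

open CrossAux

/-- On `L²(ℝ)`, with `τ` the translation group, `Mop` multiplication by
`e^{ix³}`, `F` the Fourier–Plancherel transform (up to a nonzero normalization constant)
and `Pr` the orthogonal projection onto `{ψ : 𝓕ψ = 0 a.e. outside [1,2]}`, the function
`t ↦ ‖τ_t M Pr − M Pr‖` does not tend to `0` as `t → 0`. -/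
theorem translation_on_Cb_not_cross
    (τ : ℝ → (Lp ℂ 2 (volume : Measure ℝ) →L[ℂ] Lp ℂ 2 (volume : Measure ℝ)))
    (hτ : ∀ (t : ℝ) (ψ : Lp ℂ 2 (volume : Measure ℝ)),
      (τ t ψ : ℝ → ℂ) =ᵐ[(volume : Measure ℝ)] fun x => (ψ : ℝ → ℂ) (x + t))
    (Mop : Lp ℂ 2 (volume : Measure ℝ) →L[ℂ] Lp ℂ 2 (volume : Measure ℝ))
    (hM : ∀ ψ : Lp ℂ 2 (volume : Measure ℝ),
      (Mop ψ : ℝ → ℂ) =ᵐ[(volume : Measure ℝ)]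
        fun x => Complex.exp (Complex.I * (x : ℂ) ^ 3) * (ψ : ℝ → ℂ) x)
    (F : Lp ℂ 2 (volume : Measure ℝ) →L[ℂ] Lp ℂ 2 (volume : Measure ℝ))
    (c : ℂ) (hc : c ≠ 0)
    (hF : ∀ ψ : Lp ℂ 2 (volume : Measure ℝ), Integrable (ψ : ℝ → ℂ) (volume : Measure ℝ) →
      (F ψ : ℝ → ℂ) =ᵐ[(volume : Measure ℝ)]
        fun ξ => c * ∫ x : ℝ, (ψ : ℝ → ℂ) x * Complex.exp (-(Complex.I * (ξ : ℂ) * (x : ℂ))))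
    (Pr : Lp ℂ 2 (volume : Measure ℝ) →L[ℂ] Lp ℂ 2 (volume : Measure ℝ))
    (hPidem : IsIdempotentElem Pr) (hPsa : IsSelfAdjoint Pr)
    (hPrange : ∀ ψ : Lp ℂ 2 (volume : Measure ℝ),
      Pr ψ = ψ ↔ ∀ᵐ x ∂(volume : Measure ℝ), x ∉ Set.Icc (1 : ℝ) 2 → (F ψ : ℝ → ℂ) x = 0) :
    ¬ Tendsto (fun t : ℝ => ‖τ t * (Mop * Pr) - Mop * Pr‖) (nhds 0) (nhds 0) := by
  intro hten
  have hev : ∀ᶠ s : ℝ in nhds 0, ‖τ s * (Mop * Pr) - Mop * Pr‖ < 1 :=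
    hten (Iio_mem_nhds one_pos)
  rw [Metric.eventually_nhds_iff] at hev
  obtain ⟨ε, hε, hball⟩ := hev
  set t : ℝ := ε / 2 with htdef
  have ht : 0 < t := by positivity
  have hlt : ‖τ t * (Mop * Pr) - Mop * Pr‖ < 1 := by
    apply hball
    rw [Real.dist_eq, sub_zero, abs_of_pos ht]
    rw [htdef]
    linarith
  -- choose the translation parameter a via Riemann-Lebesgue
  have hN2 : 0 < N / 2 := by have := N_pos; linarith
  obtain ⟨a, ha⟩ : ∃ a : ℝ, ‖FourierTransform.fourier (hfun t) (3*t*a/Real.pi)‖ < N / 2 := by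
    have := ((hfun_RL ht).eventually (Metric.ball_mem_nhds (0:ℂ) hN2)).exists
    simpa [Metric.mem_ball, dist_eq_norm] using this
  -- the band-limited vector
  set Ψa : Lp ℂ 2 (volume : Measure ℝ) :=
    MemLp.toLp (fun x : ℝ => ψS (x - a)) (memLp_shift a) with hΨdef
  have hΨa : ⇑Ψa =ᵐ[(volume : Measure ℝ)] fun x : ℝ => ψS (x - a) :=
    MemLp.coeFn_toLp (memLp_shift a)
  have hInt : Integrable (⇑Ψa) (volume : Measure ℝ) :=
    ((ψS.integrable (μ := (volume : Measure ℝ))).comp_sub_right a).congr hΨa.symm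
  -- Pr fixes Ψa
  have hPr : Pr Ψa = Ψa := by
    rw [hPrange]
    filter_upwards [hF Ψa hInt] with ξ hξ hout
    rw [hξ]
    have e1 : ∫ x : ℝ, (Ψa : ℝ → ℂ) x * Complex.exp (-(Complex.I * (ξ:ℂ) * (x:ℂ)))
        = ∫ x : ℝ, ψS (x - a) * Complex.exp (-(Complex.I * (ξ:ℂ) * (x:ℂ))) :=
      integral_congr_ae (hΨa.mono fun x hx => by simp only []; rw [hx])
    have e2 : (fun x : ℝ => ψS (x - a) * Complex.exp (-(Complex.I * (ξ:ℂ) * (x:ℂ))))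
        = fun x : ℝ => (fun y : ℝ =>
            ψS y * Complex.exp (-(Complex.I * (ξ:ℂ) * ((y:ℂ) + (a:ℂ))))) (x - a) := by
      funext x
      simp only
      congr 2
      push_cast
      ring
    have e3 : ∀ y : ℝ, ψS y * Complex.exp (-(Complex.I * (ξ:ℂ) * ((y:ℂ) + (a:ℂ))))
        = (ψS y * Complex.exp (-(Complex.I * (ξ:ℂ) * (y:ℂ)))) *
          Complex.exp (-(Complex.I * (ξ:ℂ) * (a:ℂ))) := by
      intro y
      have hsplit : Complex.exp (-(Complex.I * (ξ:ℂ) * ((y:ℂ) + (a:ℂ))))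
          = Complex.exp (-(Complex.I * (ξ:ℂ) * (y:ℂ))) *
            Complex.exp (-(Complex.I * (ξ:ℂ) * (a:ℂ))) := by
        rw [← Complex.exp_add]
        congr 1
        ring
      rw [hsplit]
      ring
    rw [e1, e2]
    rw [integral_sub_right_eq_self (fun y : ℝ =>
      ψS y * Complex.exp (-(Complex.I * (ξ:ℂ) * ((y:ℂ) + (a:ℂ))))) a]
    simp_rw [e3]
    rw [integral_mul_const, key ξ, bump_outside hout]
    simp
  -- a.e. representatives of the two vectors
  have hv : ⇑(Mop Ψa) =ᵐ[(volume : Measure ℝ)]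
      fun x : ℝ => Complex.exp (Complex.I * ((x : ℝ) : ℂ)^3) * ψS (x - a) := by
    filter_upwards [hM Ψa, hΨa] with x h1 h2
    rw [h1, h2]
  have hu : ⇑(τ t (Mop Ψa)) =ᵐ[(volume : Measure ℝ)]
      fun x : ℝ => Complex.exp (Complex.I * (((x + t : ℝ)) : ℂ)^3) * ψS (x + t - a) := by
    refine (hτ t (Mop Ψa)).trans ?_
    exact (measurePreserving_add_right (volume : Measure ℝ) t).quasiMeasurePreserving.ae_eq_comp hv
  -- norms
  have hnu : ‖τ t (Mop Ψa)‖ ^ 2 = N := by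
    refine norm_sq_eq_N _ (fun x : ℝ => Complex.exp (Complex.I * (((x + t : ℝ)) : ℂ)^3))
      (fun x => norm_exp_I_cube (x + t)) (a - t) (hu.trans (Eventually.of_forall fun x => ?_))
    simp only
    congr 2
    ring
  have hnv : ‖Mop Ψa‖ ^ 2 = N :=
    norm_sq_eq_N _ (fun x : ℝ => Complex.exp (Complex.I * ((x : ℝ) : ℂ)^3))
      (fun x => norm_exp_I_cube x) a hv
  have hnΨ : ‖Ψa‖ ^ 2 = N := by
    refine norm_sq_eq_N _ (fun _ => 1) (fun _ => norm_one) a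
      (hΨa.trans (Eventually.of_forall fun x => ?_))
    simp
  -- inner product bound
  have hinn : ‖(inner ℂ (τ t (Mop Ψa)) (Mop Ψa) : ℂ)‖ < N / 2 := by
    rw [inner_formula (τ t (Mop Ψa)) (Mop Ψa) hu hv]
    exact ha
  have hre : RCLike.re (inner ℂ (τ t (Mop Ψa)) (Mop Ψa) : ℂ) < N / 2 :=
    lt_of_le_of_lt (RCLike.re_le_norm _) hinn
  -- norm of the difference
  have hdiff : ‖τ t (Mop Ψa) - Mop Ψa‖ ^ 2
      = ‖τ t (Mop Ψa)‖ ^ 2 - 2 * RCLike.re (inner ℂ (τ t (Mop Ψa)) (Mop Ψa) : ℂ)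
        + ‖Mop Ψa‖ ^ 2 := norm_sub_sq (𝕜 := ℂ) _ _
  have hdiff2 : ‖Ψa‖ ^ 2 < ‖τ t (Mop Ψa) - Mop Ψa‖ ^ 2 := by
    rw [hdiff, hnu, hnv, hnΨ]
    linarith
  have hΨpos : 0 < ‖Ψa‖ := by
    have := N_pos
    by_contra hcon
    push_neg at hcon
    have : ‖Ψa‖ = 0 := le_antisymm hcon (norm_nonneg _)
    rw [this] at hnΨ
    simp at hnΨ
    linarith [N_pos, hnΨ]
  have hle : ‖Ψa‖ ≤ ‖τ t (Mop Ψa) - Mop Ψa‖ := by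
    nlinarith [norm_nonneg (τ t (Mop Ψa) - Mop Ψa), norm_nonneg Ψa]
  -- operator norm lower bound
  have hT : (τ t * (Mop * Pr) - Mop * Pr) Ψa = τ t (Mop Ψa) - Mop Ψa := by
    simp [ContinuousLinearMap.sub_apply, ContinuousLinearMap.mul_apply, hPr]
  have hop : ‖(τ t * (Mop * Pr) - Mop * Pr) Ψa‖
      ≤ ‖τ t * (Mop * Pr) - Mop * Pr‖ * ‖Ψa‖ :=
    ContinuousLinearMap.le_opNorm _ _
  rw [hT] at hop
  have hone : 1 ≤ ‖τ t * (Mop * Pr) - Mop * Pr‖ := by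
    by_contra hcon
    push_neg at hcon
    have : ‖τ t * (Mop * Pr) - Mop * Pr‖ * ‖Ψa‖ < 1 * ‖Ψa‖ :=
      mul_lt_mul_of_pos_right hcon hΨpos
    rw [one_mul] at this
    linarith
  linarith
end
end

section
/- Let 𝓗 be a complex Hilbert space and (P_n)_{n∈ℕ} a sequence of pairwise orthogonal projections on 𝓗 with Σ_n P_n v = v for every v ∈ 𝓗 (strong convergence). Put Q_n := Σ_{j≤n} P_j. Then the closed linear span R of {P_j T : j ∈ ℕ, T ∈ B(𝓗)} (the closed right ideal of B(𝓗) generated by the P_j) equals {X ∈ B(𝓗) : ‖Q_n X − X‖ → 0 as n → ∞}. -/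
open MeasureTheory Filter

noncomputable section

open scoped InnerProductSpace

lemma proj_norm_apply_le {H : Type*} [NormedAddCommGroup H] [InnerProductSpace ℂ H]
    [CompleteSpace H] (e : H →L[ℂ] H) (h1 : IsIdempotentElem e) (h2 : IsSelfAdjoint e)
    (x : H) : ‖e x‖ ≤ ‖x‖ := by
  by_cases hx : e x = 0
  · simp [hx]
  have key : (⟪e x, e x⟫_ℂ) = ⟪x, e x⟫_ℂ := by
    nth_rewrite 1 [← h2.adjoint_eq]
    rw [ContinuousLinearMap.adjoint_inner_left]
    congr 1
    have : e (e x) = (e * e) x := rfl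
    rw [this, h1]
  have h5 : ‖e x‖ * ‖e x‖ ≤ ‖x‖ * ‖e x‖ := by
    calc ‖e x‖ * ‖e x‖ = RCLike.re (⟪e x, e x⟫_ℂ) := by
          rw [← @inner_self_eq_norm_mul_norm ℂ]
      _ = RCLike.re (⟪x, e x⟫_ℂ) := by rw [key]
      _ ≤ ‖(⟪x, e x⟫_ℂ)‖ := RCLike.re_le_norm _
      _ ≤ ‖x‖ * ‖e x‖ := norm_inner_le_norm _ _
  exact le_of_mul_le_mul_right h5 (norm_pos_iff.mpr hx)

/-- For pairwise orthogonal projections `(P_n)` summing strongly to `1`,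
with partial sums `Q_n = Σ_{j ≤ n} P_j`, the closed right ideal of `B(H)` generated by the
`P_j` equals `{X : ‖Q_n X − X‖ → 0}`. -/
theorem closed_right_ideal_of_projections
    {H : Type*} [NormedAddCommGroup H] [InnerProductSpace ℂ H] [CompleteSpace H]
    (P : ℕ → H →L[ℂ] H)
    (hPproj : ∀ j, IsIdempotentElem (P j) ∧ IsSelfAdjoint (P j))
    (hPorth : ∀ i j, i ≠ j → P i * P j = 0)
    (hPsum : ∀ v : H, HasSum (fun n => P n v) v)
    (Q : ℕ → H →L[ℂ] H)
    (hQ : ∀ n, Q n = ∑ j ∈ Finset.range (n + 1), P j) :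
    closure (↑(Submodule.span ℂ
        {x : H →L[ℂ] H | ∃ j, ∃ T : H →L[ℂ] H, x = P j * T}) : Set (H →L[ℂ] H)) =
      {X : H →L[ℂ] H | Tendsto (fun n => ‖Q n * X - X‖) atTop (nhds 0)} := by
  have hQsa : ∀ n, IsSelfAdjoint (Q n) := by
    intro n
    rw [hQ n, IsSelfAdjoint, star_sum]
    exact Finset.sum_congr rfl fun j _ => (hPproj j).2
  have hQidem : ∀ n, IsIdempotentElem (Q n) := by
    intro n
    show Q n * Q n = Q n
    rw [hQ n, Finset.sum_mul_sum]
    refine Finset.sum_congr rfl fun i hi => ?_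
    rw [Finset.sum_eq_single i (fun j _ hji => hPorth i j fun h => hji h.symm)
        (fun h => absurd hi h), (hPproj i).1]
  have hQnorm : ∀ n, ‖Q n‖ ≤ 1 :=
    fun n => (Q n).opNorm_le_bound zero_le_one
      (fun x => by simpa using proj_norm_apply_le (Q n) (hQidem n) (hQsa n) x)
  have hQP : ∀ n j, j ≤ n → Q n * P j = P j := by
    intro n j hjn
    rw [hQ n, Finset.sum_mul]
    rw [Finset.sum_eq_single j (fun i _ hij => hPorth i j hij)
        (fun h => absurd (Finset.mem_range.mpr (Nat.lt_succ_of_le hjn)) h), (hPproj j).1]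
  -- span elements satisfy the tendsto condition
  have hspan : ∀ y ∈ Submodule.span ℂ
      {x : H →L[ℂ] H | ∃ j, ∃ T : H →L[ℂ] H, x = P j * T},
      Tendsto (fun n => ‖Q n * y - y‖) atTop (nhds 0) := by
    intro y hy
    induction hy using Submodule.span_induction with
    | mem x hx =>
        obtain ⟨j, T, rfl⟩ := hx
        have : ∀ n ≥ j, ‖Q n * (P j * T) - P j * T‖ = 0 := by
          intro n hn
          rw [← mul_assoc, hQP n j hn, sub_self, norm_zero]
        refine Tendsto.congr' ?_ tendsto_const_nhds
        filter_upwards [eventually_ge_atTop j] with n hn using (this n hn).symm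
    | zero => simpa using (tendsto_const_nhds : Tendsto (fun _ : ℕ => (0:ℝ)) atTop _)
    | add a b _ _ ha hb =>
        refine squeeze_zero (fun n => norm_nonneg _) (fun n => ?_) (by simpa using ha.add hb)
        have : Q n * (a + b) - (a + b) = (Q n * a - a) + (Q n * b - b) := by
          rw [mul_add]; abel
        rw [this]
        exact norm_add_le _ _
    | smul c a _ ha =>
        have hc : Tendsto (fun n => ‖c‖ * ‖Q n * a - a‖) atTop (nhds 0) := by
          simpa using ha.const_mul ‖c‖
        refine squeeze_zero (fun n => norm_nonneg _) (fun n => ?_) hc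
        have : Q n * (c • a) - c • a = c • (Q n * a - a) := by
          rw [mul_smul_comm, smul_sub]
        rw [this, norm_smul]
  ext X
  simp only [Set.mem_setOf_eq]
  constructor
  · intro hX
    rw [Metric.tendsto_atTop]
    intro ε hε
    obtain ⟨y, hy, hyd⟩ := Metric.mem_closure_iff.mp hX (ε/3) (by positivity)
    obtain ⟨N, hN⟩ := (Metric.tendsto_atTop.mp (hspan y hy)) (ε/3) (by positivity)
    refine ⟨N, fun n hn => ?_⟩
    have hNn := hN n hn
    rw [Real.dist_eq, sub_zero, abs_of_nonneg (norm_nonneg _)] at hNn ⊢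
    have hdec : Q n * X - X = Q n * (X - y) + (Q n * y - y) + (y - X) := by
      rw [mul_sub]; abel
    have hXy : ‖X - y‖ < ε/3 := by rwa [← dist_eq_norm]
    have hyX : ‖y - X‖ < ε/3 := by rwa [norm_sub_rev]
    calc ‖Q n * X - X‖ ≤ ‖Q n * (X - y)‖ + ‖Q n * y - y‖ + ‖y - X‖ := by
          rw [hdec]; exact norm_add₃_le
      _ ≤ ‖Q n‖ * ‖X - y‖ + ‖Q n * y - y‖ + ‖y - X‖ := by
          gcongr; exact norm_mul_le _ _
      _ ≤ 1 * ‖X - y‖ + ‖Q n * y - y‖ + ‖y - X‖ := by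
          gcongr; exact hQnorm n
      _ < 1 * (ε/3) + ε/3 + ε/3 := by gcongr
      _ = ε := by ring
  · intro hX
    have hmem : ∀ n, Q n * X ∈ (Submodule.span ℂ
        {x : H →L[ℂ] H | ∃ j, ∃ T : H →L[ℂ] H, x = P j * T}) := by
      intro n
      rw [hQ n, Finset.sum_mul]
      exact Submodule.sum_mem _ fun j _ =>
        Submodule.subset_span ⟨j, X, rfl⟩
    have htend : Tendsto (fun n => Q n * X) atTop (nhds X) := by
      rw [tendsto_iff_norm_sub_tendsto_zero]
      exact hX
    exact mem_closure_of_tendsto htend (Eventually.of_forall fun n => hmem n)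
end
end
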